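/- arXiv:2111.04513 — 10 statements merged into one kernel-verified Lean document; each statement's English description precedes it below -/
import Mathlib

section
/- If T is a transit cluster in a connected DAG G, then the graph G' induced by clustering T (replacing T with a single vertex t whose parents are the external parents of T's receivers and whose children are the external children of T's emitters) is also a DAG (contains no directed cycles). -/
variable {α : Type*}

/-- All edges lie within the vertex set `V`. -/
def EdgesIn (V : Set α) (E : α → α → Prop) : Prop :=
  ∀ u v, E u v → u ∈ V ∧ v ∈ V

/-- The edge relation has no directed cycles. -/
def Acyclic (E : α → α → Prop) : Prop :=
  ∀ v, ¬ Relation.TransGen E v v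

/-- A finite directed acyclic graph on vertex set `V`. -/
def IsDAG (V : Set α) (E : α → α → Prop) : Prop :=
  V.Finite ∧ EdgesIn V E ∧ Acyclic E

/-- Receivers of `T`: members of `T` with a parent outside `T`. -/
def recs (E : α → α → Prop) (T : Set α) : Set α :=
  {v | v ∈ T ∧ ∃ u, u ∉ T ∧ E u v}

/-- Emitters of `T`: members of `T` with a child outside `T`. -/
def emis (E : α → α → Prop) (T : Set α) : Set α :=
  {v | v ∈ T ∧ ∃ u, u ∉ T ∧ E v u}

/-- Edges of `G[T^=]`: the subgraph induced by `T` with incoming edges of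
receivers and outgoing edges of emitters removed. -/
def CutEdge (E : α → α → Prop) (T : Set α) (u v : α) : Prop :=
  u ∈ T ∧ v ∈ T ∧ E u v ∧ v ∉ recs E T ∧ u ∉ emis E T

/-- Undirected reachability with respect to an edge relation. -/
def UndirReach (E : α → α → Prop) (u v : α) : Prop :=
  Relation.ReflTransGen (fun a b => E a b ∨ E b a) u v

/-- `T` is a transit cluster in the graph `(V, E)`. -/
def IsTransitCluster (V : Set α) (E : α → α → Prop) (T : Set α) : Prop :=
  T.Nonempty ∧ T ⊂ V ∧
  (∀ r₁ ∈ recs E T, ∀ r₂ ∈ recs E T,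
    {u | u ∉ T ∧ E u r₁} = {u | u ∉ T ∧ E u r₂}) ∧
  (∀ e₁ ∈ emis E T, ∀ e₂ ∈ emis E T,
    {u | u ∉ T ∧ E e₁ u} = {u | u ∉ T ∧ E e₂ u}) ∧
  (∀ x ∈ T, ∃ w, (w ∈ recs E T ∨ w ∈ emis E T) ∧ UndirReach (CutEdge E T) x w) ∧
  ((emis E T).Nonempty → ∀ r ∈ recs E T, ∃ e ∈ emis E T, Relation.ReflTransGen E r e) ∧
  ((recs E T).Nonempty → ∀ e ∈ emis E T, ∃ r ∈ recs E T, Relation.ReflTransGen E r e)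

/-- Vertex set of the graph obtained by clustering `T` into the new vertex `t`. -/
def ClusterVerts (V T : Set α) (t : α) : Set α := (V \ T) ∪ {t}

/-- Edge relation of the graph obtained by clustering `T` into the new vertex `t`:
edges not touching `T` are kept, the parents of `t` are the external parents of
`recs T`, and the children of `t` are the external children of `emis T`. -/
def ClusterEdge (E : α → α → Prop) (T : Set α) (t : α) (u v : α) : Prop :=
  (u ∉ T ∧ v ∉ T ∧ E u v) ∨
  (u ∉ T ∧ u ≠ t ∧ v = t ∧ ∃ r ∈ recs E T, E u r) ∨
  (u = t ∧ v ∉ T ∧ v ≠ t ∧ ∃ e ∈ emis E T, E e v)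

/-- A transit component: a transit cluster that is connected (undirectedly)
in the subgraph it induces. -/
def IsTransitComponent (V : Set α) (E : α → α → Prop) (T : Set α) : Prop :=
  IsTransitCluster V E T ∧
  ∀ u ∈ T, ∀ v ∈ T, UndirReach (fun a b => a ∈ T ∧ b ∈ T ∧ E a b) u v

/-- clustering a transit cluster of a connected DAG yields a DAG. -/
theorem clustered_graph_is_dag
    (V : Set α) (E : α → α → Prop) (T : Set α) (t : α)
    (hdag : IsDAG V E)
    (hconn : ∀ u ∈ V, ∀ v ∈ V, UndirReach E u v)
    (ht : t ∉ V)
    (hT : IsTransitCluster V E T) :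
    IsDAG (ClusterVerts V T t) (ClusterEdge E T t) := by
  classical
  obtain ⟨hfin, hin, hacy⟩ := hdag
  obtain ⟨hTne, hTV, hrecs, hemis, _, hre, _⟩ := hT
  refine ⟨(hfin.subset Set.diff_subset).union (Set.finite_singleton t), ?_, ?_⟩
  · rintro u v (⟨hu, hv, he⟩ | ⟨hu, hut, rfl, r, hr, he⟩ | ⟨rfl, hv, hvt, e, he', hev⟩)
    · exact ⟨Or.inl ⟨(hin u v he).1, hu⟩, Or.inl ⟨(hin u v he).2, hv⟩⟩
    · exact ⟨Or.inl ⟨(hin u r he).1, hu⟩, Or.inr rfl⟩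
    · exact ⟨Or.inr rfl, Or.inl ⟨(hin e v hev).2, hv⟩⟩
  · -- acyclicity
    set t₀ : α := if h : (recs E T).Nonempty then h.choose
      else if h' : (emis E T).Nonempty then h'.choose else t with ht₀
    set φ : α → α := fun x => if x = t then t₀ else x with hφ
    have key : ∀ u v, ClusterEdge E T t u v → Relation.TransGen E (φ u) (φ v) := by
      rintro u v (⟨hu, hv, he⟩ | ⟨hu, hut, rfl, r, hr, he⟩ | ⟨rfl, hv, hvt, e, he', hev⟩)
      · have hut : u ≠ t := fun h => ht (h ▸ (hin u v he).1)
        have hvt : v ≠ t := fun h => ht (h ▸ (hin u v he).2)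
        simpa [hφ, hut, hvt] using Relation.TransGen.single he
      · have hne : (recs E T).Nonempty := ⟨r, hr⟩
        have ht₀' : t₀ = hne.choose := by rw [ht₀, dif_pos hne]
        have hr₀ : t₀ ∈ recs E T := ht₀' ▸ hne.choose_spec
        have hur₀ : E u t₀ := by
          have hm : u ∈ {u | u ∉ T ∧ E u r} := ⟨hu, he⟩
          rw [hrecs r hr t₀ hr₀] at hm
          exact hm.2
        simpa [hφ, hut] using Relation.TransGen.single hur₀
      · have hene : (emis E T).Nonempty := ⟨e, he'⟩
        by_cases hne : (recs E T).Nonempty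
        · have ht₀' : t₀ = hne.choose := by rw [ht₀, dif_pos hne]
          have hr₀ : t₀ ∈ recs E T := ht₀' ▸ hne.choose_spec
          obtain ⟨e₀, he₀, hpath⟩ := hre hene t₀ hr₀
          have he₀v : E e₀ v := by
            have hm : v ∈ {u | u ∉ T ∧ E e u} := ⟨hv, hev⟩
            rw [hemis e he' e₀ he₀] at hm
            exact hm.2
          have : Relation.TransGen E t₀ v := Relation.TransGen.tail' hpath he₀v
          simpa [hφ, hvt] using this
        · have ht₀' : t₀ = hene.choose := by rw [ht₀, dif_neg hne, dif_pos hene]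
          have he₀ : t₀ ∈ emis E T := ht₀' ▸ hene.choose_spec
          have he₀v : E t₀ v := by
            have hm : v ∈ {u | u ∉ T ∧ E e u} := ⟨hv, hev⟩
            rw [hemis e he' t₀ he₀] at hm
            exact hm.2
          simpa [hφ, hvt] using Relation.TransGen.single he₀v
    have lift : ∀ u v, Relation.TransGen (ClusterEdge E T t) u v →
        Relation.TransGen E (φ u) (φ v) := by
      intro u v h
      induction h with
      | single h => exact key _ _ h
      | tail _ h ih => exact ih.trans (key _ _ h)
    intro v hcyc
    exact hacy (φ v) (lift v v hcyc)
end

section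
/- If T and S are transit clusters in a DAG G such that rec(T) = rec(S) and em(T) = em(S), then T = S. -/
variable {α : Type*}

/-- An undirected path in `G[T^=]` starting outside `S` stays outside `S`,
provided `T` and `S` have the same receivers and emitters. -/
lemma cutedge_reach_stays_out
    (E : α → α → Prop) (T S : Set α)
    (hrec : recs E T = recs E S)
    (hemi : emis E T = emis E S)
    {x y : α} (h : UndirReach (CutEdge E T) x y) (hx : x ∉ S) : y ∉ S := by
  induction h with
  | refl => exact hx
  | tail _ step ih =>
    rename_i b y _
    intro hyS
    rcases step with ⟨hbT, hyT, hEby, hynr, _⟩ | ⟨hyT, hbT, hEyb, _, hyne⟩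
    · exact hynr (hrec ▸ (⟨hyS, b, ih, hEby⟩ : y ∈ recs E S))
    · exact hyne (hemi ▸ (⟨hyS, b, ih, hEyb⟩ : y ∈ emis E S))

/-- a transit cluster is determined by its receivers and emitters. -/
theorem transit_cluster_unique
    (V : Set α) (E : α → α → Prop) (T S : Set α)
    (hdag : IsDAG V E)
    (hT : IsTransitCluster V E T)
    (hS : IsTransitCluster V E S)
    (hrec : recs E T = recs E S)
    (hemi : emis E T = emis E S) :
    T = S := by
  ext x
  constructor
  · intro hxT
    by_contra hxS
    obtain ⟨w, hw, hreach⟩ := hT.2.2.2.2.1 x hxT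
    have hwS : w ∈ S := by
      rcases hw with h | h
      · exact (hrec ▸ h).1
      · exact (hemi ▸ h).1
    exact cutedge_reach_stays_out E T S hrec hemi hreach hxS hwS
  · intro hxS
    by_contra hxT
    obtain ⟨w, hw, hreach⟩ := hS.2.2.2.2.1 x hxS
    have hwT : w ∈ T := by
      rcases hw with h | h
      · exact (hrec ▸ h).1
      · exact (hemi ▸ h).1
    exact cutedge_reach_stays_out E S T hrec.symm hemi.symm hreach hxT hwT
end

section
/- Let T be a transit cluster in a DAG G = (V,E) and let G' be the graph induced by clustering T into a single vertex t. Then a set S ⊆ V \ T is a transit cluster in G if and only if S is a transit cluster in G'. (Invariance of transit clusters.) -/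
variable {α : Type*}

/-!
Vertices of `S` lie outside `T` and differ from `t`, so edges inside `S` are the same in both
graphs, and an edge between `S` and `T` becomes an edge between `S` and `t`; hence `S` has the
same receivers, emitters and cut edges in both graphs. Because the emitters of `T` share their
external children, a vertex of `S` has either all emitters of `T` or none of them as parents,
according as `t` is its parent in the clustered graph or not. So two receivers of `S` have the
same parents in one graph iff in the other, and likewise for children (the same statement for the
reversed graph). A path through `t` in the clustered graph enters `T` at a receiver and leaves it
at an emitter; it lifts to a path in `G` because every receiver of `T` reaches an emitter.
-/

open Relation

variable {V : Set α} {E : α → α → Prop} {T S : Set α} {t : α}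

theorem EdgesIn.flip (hE : EdgesIn V E) : EdgesIn V (flip E) :=
  fun u v h => (hE v u h).symm

theorem recs_flip : recs (flip E) S = emis E S := rfl

theorem clusterEdge_flip : ClusterEdge (flip E) T t = flip (ClusterEdge E T t) := by
  funext u v
  apply propext
  simp only [ClusterEdge, flip, recs, emis]
  grind

theorem recs_clusterEdge (hS : S ⊆ Tᶜ) (htS : t ∉ S) :
    recs (ClusterEdge E T t) S = recs E S := by
  ext v
  constructor
  · rintro ⟨hv, u, hu, ⟨-, -, huv⟩ | ⟨-, -, rfl, -⟩ | ⟨rfl, -, -, e, he, hev⟩⟩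
    · exact ⟨hv, u, hu, huv⟩
    · exact absurd hv htS
    · exact ⟨hv, e, fun heS => hS heS he.1, hev⟩
  · rintro ⟨hv, u, hu, huv⟩
    by_cases huT : u ∈ T
    · exact ⟨hv, t, htS, Or.inr <| Or.inr
        ⟨rfl, hS hv, ne_of_mem_of_not_mem hv htS, u, ⟨huT, v, hS hv, huv⟩, huv⟩⟩
    · exact ⟨hv, u, hu, Or.inl ⟨huT, hS hv, huv⟩⟩

theorem emis_clusterEdge (hS : S ⊆ Tᶜ) (htS : t ∉ S) :
    emis (ClusterEdge E T t) S = emis E S := by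
  rw [← recs_flip, ← clusterEdge_flip, recs_clusterEdge hS htS, recs_flip]

theorem clusterEdge_iff_of_ne {u v : α} (hu : u ∉ T) (hv : v ∉ T) (hut : u ≠ t) (hvt : v ≠ t) :
    ClusterEdge E T t u v ↔ E u v :=
  ⟨fun h => h.elim (·.2.2) fun h => h.elim (absurd ·.2.2.1 hvt) (absurd ·.1 hut),
    fun h => Or.inl ⟨hu, hv, h⟩⟩

theorem cutEdge_clusterEdge (hS : S ⊆ Tᶜ) (htS : t ∉ S) :
    CutEdge (ClusterEdge E T t) S = CutEdge E S := by
  funext u v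
  apply propext
  simp only [CutEdge, recs_clusterEdge hS htS, emis_clusterEdge hS htS]
  constructor
  · rintro ⟨hu, hv, huv, hrest⟩
    exact ⟨hu, hv, (clusterEdge_iff_of_ne (hS hu) (hS hv) (ne_of_mem_of_not_mem hu htS)
      (ne_of_mem_of_not_mem hv htS)).1 huv, hrest⟩
  · rintro ⟨hu, hv, huv, hrest⟩
    exact ⟨hu, hv, Or.inl ⟨hS hu, hS hv, huv⟩, hrest⟩

theorem ssubset_clusterVerts (hS : S ⊆ V \ T) (htS : t ∉ S) : S ⊂ ClusterVerts V T t :=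
  (Set.ssubset_iff_of_subset (hS.trans Set.subset_union_left)).2 ⟨t, Or.inr rfl, htS⟩

theorem ssubset_of_subset_diff {x : α} (hS : S ⊆ V \ T) (hx : x ∈ V) (hxT : x ∈ T) : S ⊂ V :=
  (Set.ssubset_iff_of_subset fun _ h => (hS h).1).2 ⟨x, hx, fun h => (hS h).2 hxT⟩

theorem parents_clusterEdge_subset_iff (hE : EdgesIn V E) (ht : t ∉ V)
    (hTemi : ∀ e₁ ∈ emis E T, ∀ e₂ ∈ emis E T,
      {u | u ∉ T ∧ E e₁ u} = {u | u ∉ T ∧ E e₂ u})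
    (hS : S ⊆ Tᶜ) (htS : t ∉ S) {r₁ r₂ : α} (h₁ : r₁ ∈ S) (h₂ : r₂ ∈ S) :
    {u | u ∉ S ∧ ClusterEdge E T t u r₁} ⊆ {u | u ∉ S ∧ ClusterEdge E T t u r₂} ↔
      {u | u ∉ S ∧ E u r₁} ⊆ {u | u ∉ S ∧ E u r₂} := by
  have hr₁t := ne_of_mem_of_not_mem h₁ htS
  have hr₂t := ne_of_mem_of_not_mem h₂ htS
  constructor
  · rintro hsub u ⟨hu, hur₁⟩
    by_cases huT : u ∈ T
    · -- `t` is a parent of `r₁` through the emitter `u`, hence of `r₂` through some emitter `e`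
      have hue : u ∈ emis E T := ⟨huT, r₁, hS h₁, hur₁⟩
      obtain ⟨-, ⟨-, -, htr₂⟩ | ⟨-, htt, -⟩ | ⟨-, -, -, e, he, her₂⟩⟩ :=
        hsub ⟨htS, Or.inr <| Or.inr ⟨rfl, hS h₁, hr₁t, u, hue, hur₁⟩⟩
      · exact absurd (hE _ _ htr₂).1 ht
      · exact absurd rfl htt
      · exact ⟨hu, (hTemi e he u hue ▸ ⟨hS h₂, her₂⟩ : r₂ ∈ {w | w ∉ T ∧ E u w}).2⟩
    · obtain ⟨-, ⟨-, -, hur₂⟩ | ⟨-, -, hr₂, -⟩ | ⟨rfl, -⟩⟩ :=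
        hsub ⟨hu, Or.inl ⟨huT, hS h₁, hur₁⟩⟩
      · exact ⟨hu, hur₂⟩
      · exact absurd hr₂ hr₂t
      · exact absurd (hE _ _ hur₁).1 ht
  · rintro hsub u ⟨hu, ⟨huT, -, hur₁⟩ | ⟨-, -, hr₁, -⟩ | ⟨rfl, -, -, e, he, her₁⟩⟩
    · exact ⟨hu, Or.inl ⟨huT, hS h₂, (hsub ⟨hu, hur₁⟩).2⟩⟩
    · exact absurd hr₁ hr₁t
    · have her₂ : E e r₂ := (hsub ⟨fun heS => hS heS he.1, her₁⟩).2
      exact ⟨hu, Or.inr <| Or.inr ⟨rfl, hS h₂, hr₂t, e, ⟨he.1, r₂, hS h₂, her₂⟩, her₂⟩⟩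

theorem parents_clusterEdge_eq_iff (hE : EdgesIn V E) (ht : t ∉ V)
    (hTemi : ∀ e₁ ∈ emis E T, ∀ e₂ ∈ emis E T,
      {u | u ∉ T ∧ E e₁ u} = {u | u ∉ T ∧ E e₂ u})
    (hS : S ⊆ Tᶜ) (htS : t ∉ S) {r₁ r₂ : α} (h₁ : r₁ ∈ S) (h₂ : r₂ ∈ S) :
    {u | u ∉ S ∧ ClusterEdge E T t u r₁} = {u | u ∉ S ∧ ClusterEdge E T t u r₂} ↔
      {u | u ∉ S ∧ E u r₁} = {u | u ∉ S ∧ E u r₂} := by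
  rw [Set.Subset.antisymm_iff, Set.Subset.antisymm_iff,
    parents_clusterEdge_subset_iff hE ht hTemi hS htS h₁ h₂,
    parents_clusterEdge_subset_iff hE ht hTemi hS htS h₂ h₁]

theorem children_clusterEdge_eq_iff (hE : EdgesIn V E) (ht : t ∉ V)
    (hTrec : ∀ r₁ ∈ recs E T, ∀ r₂ ∈ recs E T,
      {u | u ∉ T ∧ E u r₁} = {u | u ∉ T ∧ E u r₂})
    (hS : S ⊆ Tᶜ) (htS : t ∉ S) {e₁ e₂ : α} (h₁ : e₁ ∈ S) (h₂ : e₂ ∈ S) :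
    {u | u ∉ S ∧ ClusterEdge E T t e₁ u} = {u | u ∉ S ∧ ClusterEdge E T t e₂ u} ↔
      {u | u ∉ S ∧ E e₁ u} = {u | u ∉ S ∧ E e₂ u} := by
  have h := parents_clusterEdge_eq_iff (E := flip E) hE.flip ht hTrec hS htS h₁ h₂
  rwa [clusterEdge_flip] at h

open Classical in
noncomputable def collapse (T : Set α) (t : α) (x : α) : α := if x ∈ T then t else x

theorem collapse_of_notMem {x : α} (hx : x ∉ T) : collapse T t x = x := if_neg hx

theorem reflTransGen_clusterEdge_collapse (hE : EdgesIn V E) (ht : t ∉ V) {a b : α}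
    (h : ReflTransGen E a b) :
    ReflTransGen (ClusterEdge E T t) (collapse T t a) (collapse T t b) := by
  refine h.lift' (collapse T t) fun u v huv => ?_
  have hut : u ≠ t := fun h => ht (h ▸ (hE u v huv).1)
  have hvt : v ≠ t := fun h => ht (h ▸ (hE u v huv).2)
  by_cases hu : u ∈ T <;> by_cases hv : v ∈ T <;>
    simp only [Function.onFun, collapse, hu, hv, if_true, if_false]
  · exact .refl
  · exact .single <| Or.inr <| Or.inr ⟨rfl, hv, hvt, u, ⟨hu, v, hv, huv⟩, huv⟩
  · exact .single <| Or.inr <| Or.inl ⟨hu, hut, rfl, v, ⟨hv, u, hu, huv⟩, huv⟩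
  · exact .single <| Or.inl ⟨hu, hv, huv⟩

theorem reflTransGen_of_reflTransGen_clusterEdge (hE : EdgesIn V E) (ht : t ∉ V)
    (hTemi : ∀ e₁ ∈ emis E T, ∀ e₂ ∈ emis E T,
      {u | u ∉ T ∧ E e₁ u} = {u | u ∉ T ∧ E e₂ u})
    (hTre : (emis E T).Nonempty → ∀ r ∈ recs E T, ∃ e ∈ emis E T, ReflTransGen E r e)
    {a b : α} (h : ReflTransGen (ClusterEdge E T t) a b) (hbt : b ≠ t) :
    (a ≠ t → ReflTransGen E a b) ∧ (a = t → ∀ e ∈ emis E T, ReflTransGen E e b) := by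
  induction h using ReflTransGen.head_induction_on with
  | refl => exact ⟨fun _ => .refl, fun h => absurd h hbt⟩
  | @head a c hac hcb ih =>
    refine ⟨fun hat => ?_, ?_⟩
    · rcases hac with ⟨-, -, hac⟩ | ⟨-, -, rfl, r, hr, har⟩ | ⟨rfl, -⟩
      · exact .head hac (ih.1 fun h => ht (h ▸ (hE a c hac).2))
      · -- the path leaves `t` along an edge of some emitter, so `T` has emitters
        have hemis : (emis E T).Nonempty := by
          obtain ⟨d, ⟨-, -, htd⟩ | ⟨-, htt, -⟩ | ⟨-, -, -, e, he, -⟩, -⟩ :=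
            hcb.cases_head.resolve_left (Ne.symm hbt)
          · exact absurd (hE _ _ htd).1 ht
          · exact absurd rfl htt
          · exact ⟨e, he⟩
        obtain ⟨e, he, hre⟩ := hTre hemis r hr
        exact .head har (hre.trans (ih.2 rfl e he))
      · exact absurd rfl hat
    · rintro rfl
      obtain ⟨-, -, htc⟩ | ⟨-, htt, -⟩ | ⟨-, hcT, hct, e₀, he₀, he₀c⟩ := hac
      · exact absurd (hE _ _ htc).1 ht
      · exact absurd rfl htt
      · intro e he
        exact .head (hTemi e₀ he₀ e he ▸ ⟨hcT, he₀c⟩ : c ∈ {u | u ∉ T ∧ E e u}).2 (ih.1 hct)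

theorem reflTransGen_clusterEdge_iff (hE : EdgesIn V E) (ht : t ∉ V)
    (hTemi : ∀ e₁ ∈ emis E T, ∀ e₂ ∈ emis E T,
      {u | u ∉ T ∧ E e₁ u} = {u | u ∉ T ∧ E e₂ u})
    (hTre : (emis E T).Nonempty → ∀ r ∈ recs E T, ∃ e ∈ emis E T, ReflTransGen E r e)
    {a b : α} (ha : a ∉ T) (hb : b ∉ T) (hat : a ≠ t) (hbt : b ≠ t) :
    ReflTransGen (ClusterEdge E T t) a b ↔ ReflTransGen E a b := by
  refine ⟨fun h => (reflTransGen_of_reflTransGen_clusterEdge hE ht hTemi hTre h hbt).1 hat,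
    fun h => ?_⟩
  simpa only [collapse_of_notMem ha, collapse_of_notMem hb] using
    reflTransGen_clusterEdge_collapse (T := T) hE ht h

/-- invariance of transit clusters under clustering of a disjoint
transit cluster. -/
theorem transit_cluster_invariance
    (V : Set α) (E : α → α → Prop) (T S : Set α) (t : α)
    (hdag : IsDAG V E)
    (ht : t ∉ V)
    (hT : IsTransitCluster V E T)
    (hS : S ⊆ V \ T) :
    IsTransitCluster V E S ↔
      IsTransitCluster (ClusterVerts V T t) (ClusterEdge E T t) S := by
  obtain ⟨-, hE, -⟩ := hdag
  obtain ⟨⟨x, hxT⟩, hTV, hTrec, hTemi, -, hTre, -⟩ := hT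
  have hST : S ⊆ Tᶜ := fun _ h => (hS h).2
  have htS : t ∉ S := fun h => ht (hS h).1
  have hreach : ∀ a ∈ S, ∀ b ∈ S, ReflTransGen E a b ↔ ReflTransGen (ClusterEdge E T t) a b :=
    fun a ha b hb => (reflTransGen_clusterEdge_iff hE ht hTemi hTre (hST ha) (hST hb)
      (ne_of_mem_of_not_mem ha htS) (ne_of_mem_of_not_mem hb htS)).symm
  unfold IsTransitCluster
  rw [recs_clusterEdge hST htS, emis_clusterEdge hST htS, cutEdge_clusterEdge hST htS]
  refine and_congr_right' <| and_congr (iff_of_true (ssubset_of_subset_diff hS (hTV.1 hxT) hxT)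
    (ssubset_clusterVerts hS htS)) <| and_congr ?_ <| and_congr ?_ <| and_congr_right' <|
    and_congr ?_ ?_
  · exact forall₂_congr fun r₁ h₁ => forall₂_congr fun r₂ h₂ =>
      (parents_clusterEdge_eq_iff hE ht hTemi hST htS h₁.1 h₂.1).symm
  · exact forall₂_congr fun e₁ h₁ => forall₂_congr fun e₂ h₂ =>
      (children_clusterEdge_eq_iff hE ht hTrec hST htS h₁.1 h₂.1).symm
  · exact imp_congr_right fun _ => forall₂_congr fun r hr =>
      exists_congr fun e => and_congr_right fun he => hreach r hr.1 e he.1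
  · exact imp_congr_right fun _ => forall₂_congr fun e he =>
      exists_congr fun r => and_congr_right fun hr => hreach r hr.1 e he.1
end

section
/- Let T be a transit cluster in a DAG G = (V,E) and let G' be the graph induced by clustering T into a single vertex t. For any S ⊆ V \ T, the set {t} ∪ S is a transit cluster in G' if and only if T ∪ S is a transit cluster in G. (Modularity of transit clusters.) -/
variable {α : Type*}

/-!
Clustering acts on vertices by `collapse`, which sends `T` to `t` and fixes everything else.
Since the receivers of `T` share their external parents, `collapse` maps the receivers of `T ∪ S`
onto those of `insert t S` without changing external parents, and dually for emitters; this
transfers the two sharing conditions. Directed paths project along `collapse`, and they lift back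
because a path may cross `t` from any receiver of `T` to any emitter of `T`.

For the connectivity condition, cut edges project as well. Conversely, the property "every vertex
of the fibre reaches a receiver or emitter" is invariant along cut edges of the clustered graph: a
cut edge into `t` comes from a vertex joined by cut edges to all receivers of `T`, and once all
receivers of `T` reach one, so does all of `T`, by walking along directed paths towards emitters.

The conditions come in pairs exchanged by reversing all edges (`swap E`), so only one member of
each pair needs an argument.
-/

open Function Relation

namespace TransitCluster

def SharedParents (E : α → α → Prop) (T : Set α) : Prop :=
  ∀ r₁ ∈ recs E T, ∀ r₂ ∈ recs E T, {u | u ∉ T ∧ E u r₁} = {u | u ∉ T ∧ E u r₂}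

def RecsReachEmis (E : α → α → Prop) (T : Set α) : Prop :=
  (emis E T).Nonempty → ∀ r ∈ recs E T, ∃ e ∈ emis E T, ReflTransGen E r e

def ReachesPort (E : α → α → Prop) (U : Set α) (x : α) : Prop :=
  ∃ w, (w ∈ recs E U ∨ w ∈ emis E U) ∧ UndirReach (CutEdge E U) x w

structure IsTransit (E : α → α → Prop) (T : Set α) : Prop where
  sharedParents : SharedParents E T
  sharedChildren : SharedParents (swap E) T
  reachesPort : ∀ x ∈ T, ReachesPort E T x
  recsReachEmis : RecsReachEmis E T
  emisReachedFromRecs : RecsReachEmis (swap E) T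

section Duality

variable {E : α → α → Prop} {T U : Set α}

@[simp] theorem recs_swap : recs (swap E) T = emis E T := rfl

@[simp] theorem emis_swap : emis (swap E) T = recs E T := rfl

theorem cutEdge_swap : CutEdge (swap E) U = swap (CutEdge E U) := by
  ext u v
  simp only [CutEdge, swap, recs_swap, emis_swap]
  tauto

theorem undirReach_swap (R : α → α → Prop) : UndirReach (swap R) = UndirReach R := by
  have h : (fun a b => swap R a b ∨ swap R b a) = fun a b => R a b ∨ R b a := by
    ext a b
    exact or_comm
  unfold UndirReach
  rw [h]

theorem reachesPort_swap : ReachesPort (swap E) U = ReachesPort E U := by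
  ext x
  simp only [ReachesPort, recs_swap, emis_swap, cutEdge_swap, undirReach_swap, or_comm]

theorem recsReachEmis_swap_iff : RecsReachEmis (swap E) T ↔
    ((recs E T).Nonempty → ∀ e ∈ emis E T, ∃ r ∈ recs E T, ReflTransGen E r e) := by
  simp only [RecsReachEmis, recs_swap, emis_swap, reflTransGen_swap]

theorem IsTransit.reverse (h : IsTransit E T) : IsTransit (swap E) T where
  sharedParents := h.sharedChildren
  sharedChildren := h.sharedParents
  reachesPort := reachesPort_swap (E := E) ▸ h.reachesPort
  recsReachEmis := h.emisReachedFromRecs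
  emisReachedFromRecs := h.recsReachEmis

theorem isTransitCluster_iff {V : Set α} :
    IsTransitCluster V E T ↔ T.Nonempty ∧ T ⊂ V ∧ IsTransit E T := by
  constructor
  · rintro ⟨hne, hV, h3, h4, h5, h6, h7⟩
    exact ⟨hne, hV, h3, h4, h5, h6, recsReachEmis_swap_iff.2 h7⟩
  · rintro ⟨hne, hV, h3, h4, h5, h6, h7⟩
    exact ⟨hne, hV, h3, h4, h5, h6, recsReachEmis_swap_iff.1 h7⟩

end Duality

section Enlargement

variable {E : α → α → Prop} {T U : Set α} {u v x y r₁ r₂ : α}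

theorem mem_recs_of_subset (hTU : T ⊆ U) (hv : v ∈ T) (h : v ∈ recs E U) : v ∈ recs E T :=
  let ⟨_, u, hu, he⟩ := h
  ⟨hv, u, fun huT => hu (hTU huT), he⟩

theorem mem_emis_of_subset (hTU : T ⊆ U) (hv : v ∈ T) (h : v ∈ emis E U) : v ∈ emis E T :=
  mem_recs_of_subset (E := swap E) hTU hv h

theorem SharedParents.edge (hT : SharedParents E T) (h₁ : r₁ ∈ recs E T) (h₂ : r₂ ∈ recs E T)
    (hu : u ∉ T) (he : E u r₁) : E u r₂ :=
  ((Set.ext_iff.1 (hT r₁ h₁ r₂ h₂) u).1 ⟨hu, he⟩).2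

theorem SharedParents.mem_recs (hT : SharedParents E T) (hTU : T ⊆ U) (h₁ : r₁ ∈ recs E T)
    (h₂ : r₂ ∈ recs E T) (h : r₁ ∈ recs E U) : r₂ ∈ recs E U :=
  let ⟨_, u, hu, he⟩ := h
  ⟨hTU h₂.1, u, hu, hT.edge h₁ h₂ (fun huT => hu (hTU huT)) he⟩

theorem SharedParents.recs_subset_or_disjoint (hT : SharedParents E T) (hTU : T ⊆ U) :
    recs E T ⊆ recs E U ∨ Disjoint T (recs E U) := by
  by_contra! h
  obtain ⟨v, hvT, hvU⟩ := Set.not_disjoint_iff.1 h.2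
  exact h.1 fun r hr => hT.mem_recs hTU (mem_recs_of_subset hTU hvT hvU) hr hvU

theorem cutEdge_of_subset (hTU : T ⊆ U) (h : CutEdge E T u v) : CutEdge E U u v :=
  let ⟨hu, hv, he, hvr, hue⟩ := h
  ⟨hTU hu, hTU hv, he, fun h => hvr (mem_recs_of_subset hTU hv h),
    fun h => hue (mem_emis_of_subset hTU hu h)⟩

theorem reachesPort_of_mem_recs (h : x ∈ recs E U) : ReachesPort E U x :=
  ⟨x, Or.inl h, ReflTransGen.refl⟩

theorem reachesPort_of_mem_emis (h : x ∈ emis E U) : ReachesPort E U x :=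
  ⟨x, Or.inr h, ReflTransGen.refl⟩

theorem ReachesPort.of_undirReach (hy : ReachesPort E U y) (h : UndirReach (CutEdge E U) x y) :
    ReachesPort E U x :=
  let ⟨w, hw, hyw⟩ := hy
  ⟨w, hw, h.trans hyw⟩

theorem reachesPort_iff_of_cutEdge (h : CutEdge E U x y) : ReachesPort E U x ↔ ReachesPort E U y :=
  ⟨fun hx => hx.of_undirReach (ReflTransGen.single (Or.inr h)),
    fun hy => hy.of_undirReach (ReflTransGen.single (Or.inl h))⟩

/-- Along a directed path in `T`, each edge is a cut edge of `U` until the path reaches an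
emitter of `U` or leaves `T` (through an emitter of `T`). -/
theorem reachesPort_of_reflTransGen (hTU : T ⊆ U) (hR : Disjoint T (recs E U))
    (hem : ∀ e ∈ emis E T, ReachesPort E U e) (hp : ReflTransGen E x y) (hx : x ∈ T)
    (hy : y ∈ emis E T) : ReachesPort E U x := by
  induction hp using ReflTransGen.head_induction_on with
  | refl => exact hem _ hy
  | @head x z hxz _ ih =>
    by_cases hxU : x ∈ emis E U
    · exact reachesPort_of_mem_emis hxU
    by_cases hz : z ∈ T
    · exact (ih hz).of_undirReach
        (ReflTransGen.single (Or.inl ⟨hTU hx, hTU hz, hxz, Set.disjoint_left.1 hR hz, hxU⟩))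
    · exact hem x ⟨hx, z, hz, hxz⟩

theorem reachesPort_recs_of_emis (hT₃ : SharedParents E T) (hT₆ : RecsReachEmis E T)
    (hTU : T ⊆ U) (hne : (emis E T).Nonempty) (hem : ∀ e ∈ emis E T, ReachesPort E U e) :
    ∀ r ∈ recs E T, ReachesPort E U r := by
  intro r hr
  rcases hT₃.recs_subset_or_disjoint hTU with hsub | hR
  · exact reachesPort_of_mem_recs (hsub hr)
  · obtain ⟨e, he, hre⟩ := hT₆ hne r hr
    exact reachesPort_of_reflTransGen hTU hR hem hre hr.1 he

theorem IsTransit.reachesPort_of_recs (hT : IsTransit E T) (hTU : T ⊆ U)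
    (hne : (recs E T).Nonempty) (hrec : ∀ r ∈ recs E T, ReachesPort E U r) :
    ∀ x ∈ T, ReachesPort E U x := by
  have hem : ∀ e ∈ emis E T, ReachesPort E U e := by
    simpa only [reachesPort_swap, recs_swap] using
      reachesPort_recs_of_emis hT.sharedChildren hT.emisReachedFromRecs hTU hne
        (by simpa only [reachesPort_swap, emis_swap] using hrec)
  intro x hx
  obtain ⟨w, hw, hxw⟩ := hT.reachesPort x hx
  have hwU : ReachesPort E U w := hw.elim (hrec w) (hem w)
  exact hwU.of_undirReach <| ReflTransGen.mono
    (fun _ _ hab => Or.imp (cutEdge_of_subset hTU) (cutEdge_of_subset hTU) hab) _ _ hxw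

end Enlargement

open Classical in
noncomputable def collapse (T : Set α) (t x : α) : α := if x ∈ T then t else x

structure ClusterSetting (E : α → α → Prop) (T S : Set α) (t : α) : Prop where
  not_edge_to : ∀ u, ¬ E u t
  not_edge_from : ∀ u, ¬ E t u
  notMem : t ∉ S
  disjoint : Disjoint S T

section Clustering

variable {E : α → α → Prop} {T S : Set α} {t u v x y r : α}

theorem collapse_of_mem (hx : x ∈ T) : collapse T t x = t := if_pos hx

theorem collapse_of_notMem (hx : x ∉ T) : collapse T t x = x := if_neg hx

theorem ClusterSetting.of_edgesIn {V : Set α} (hE : EdgesIn V E) (ht : t ∉ V)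
    (hS : S ⊆ V \ T) : ClusterSetting E T S t where
  not_edge_to u he := ht (hE u t he).2
  not_edge_from u he := ht (hE t u he).1
  notMem h := ht (hS h).1
  disjoint := Set.disjoint_left.2 fun _ h => (hS h).2

theorem ClusterSetting.reverse (hs : ClusterSetting E T S t) : ClusterSetting (swap E) T S t :=
  ⟨hs.not_edge_from, hs.not_edge_to, hs.notMem, hs.disjoint⟩

theorem ClusterSetting.ne_of_mem (hs : ClusterSetting E T S t) (hx : x ∈ S) : x ≠ t :=
  fun h => hs.notMem (h ▸ hx)

theorem ClusterSetting.notMem_of_mem (hs : ClusterSetting E T S t) (hx : x ∈ S) : x ∉ T :=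
  Set.disjoint_left.1 hs.disjoint hx

theorem ClusterSetting.collapse_mem (hs : ClusterSetting E T S t) (hx : x ∈ T ∪ S) :
    collapse T t x ∈ insert t S := by
  rcases hx with hx | hx
  · exact collapse_of_mem hx ▸ Set.mem_insert t S
  · rw [collapse_of_notMem (hs.notMem_of_mem hx)]
    exact Set.mem_insert_of_mem t hx

theorem ClusterSetting.mem_of_collapse_eq (hs : ClusterSetting E T S t) (hx : x ∈ T ∪ S)
    (h : collapse T t x = t) : x ∈ T := by
  by_contra hxT
  rw [collapse_of_notMem hxT] at h
  exact hs.notMem (h ▸ hx.resolve_left hxT)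

theorem clusterEdge_swap : ClusterEdge (swap E) T t = swap (ClusterEdge E T t) := by
  ext u v
  simp only [ClusterEdge, swap, recs_swap, emis_swap]
  grind

theorem ClusterSetting.clusterEdge_to_iff (hs : ClusterSetting E T S t) :
    ClusterEdge E T t u t ↔ u ∉ T ∧ ∃ r ∈ recs E T, E u r := by
  constructor
  · rintro (⟨-, -, he⟩ | ⟨hu, -, -, h⟩ | ⟨rfl, -, h, -⟩)
    · exact absurd he (hs.not_edge_to u)
    · exact ⟨hu, h⟩
    · exact absurd rfl h
  · rintro ⟨hu, r, hr, he⟩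
    exact Or.inr (Or.inl ⟨hu, fun h => hs.not_edge_from r (h ▸ he), rfl, r, hr, he⟩)

theorem clusterEdge_iff_of_ne (hu : u ≠ t) (hv : v ≠ t) :
    ClusterEdge E T t u v ↔ u ∉ T ∧ v ∉ T ∧ E u v := by
  constructor
  · rintro (h | ⟨-, -, h, -⟩ | ⟨h, -⟩)
    · exact h
    · exact absurd h hv
    · exact absurd h hu
  · exact Or.inl

theorem ClusterSetting.clusterEdge_collapse (hs : ClusterSetting E T S t) (he : E u v)
    (huv : u ∉ T ∨ v ∉ T) : ClusterEdge E T t (collapse T t u) (collapse T t v) := by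
  by_cases hu : u ∈ T <;> by_cases hv : v ∈ T
  · exact absurd ⟨hu, hv⟩ (not_and_or.2 huv)
  · rw [collapse_of_mem hu, collapse_of_notMem hv]
    exact Or.inr (Or.inr ⟨rfl, hv, fun h => hs.not_edge_to u (h ▸ he), u, ⟨hu, v, hv, he⟩, he⟩)
  · rw [collapse_of_notMem hu, collapse_of_mem hv]
    exact hs.clusterEdge_to_iff.2 ⟨hu, v, ⟨hv, u, hu, he⟩, he⟩
  · rw [collapse_of_notMem hu, collapse_of_notMem hv]
    exact Or.inl ⟨hu, hv, he⟩

theorem ClusterSetting.reflTransGen_collapse (hs : ClusterSetting E T S t)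
    (h : ReflTransGen E x y) :
    ReflTransGen (ClusterEdge E T t) (collapse T t x) (collapse T t y) := by
  refine ReflTransGen.lift' (collapse T t) (fun a b hab => ?_) _ _ h
  change ReflTransGen _ (collapse T t a) (collapse T t b)
  by_cases hT : a ∈ T ∧ b ∈ T
  · rw [collapse_of_mem hT.1, collapse_of_mem hT.2]
  · exact ReflTransGen.single (hs.clusterEdge_collapse hab (not_and_or.1 hT))

theorem ClusterSetting.parents_collapse (hs : ClusterSetting E T S t) (hT : SharedParents E T)
    (hr : r ∈ T ∪ S) (hrT : r ∈ T → r ∈ recs E T) :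
    {u | u ∉ insert t S ∧ ClusterEdge E T t u (collapse T t r)} = {u | u ∉ T ∪ S ∧ E u r} := by
  ext u
  simp only [Set.mem_ofPred_eq, Set.mem_insert_iff, Set.mem_union, not_or]
  constructor
  · rintro ⟨⟨hut, huS⟩, he⟩
    by_cases hrT' : r ∈ T
    · rw [collapse_of_mem hrT', hs.clusterEdge_to_iff] at he
      obtain ⟨huT, r', hr', hur'⟩ := he
      exact ⟨⟨huT, huS⟩, hT.edge hr' (hrT hrT') huT hur'⟩
    · have hrt : r ≠ t := hs.ne_of_mem (hr.resolve_left hrT')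
      rw [collapse_of_notMem hrT', clusterEdge_iff_of_ne hut hrt] at he
      exact ⟨⟨he.1, huS⟩, he.2.2⟩
  · rintro ⟨⟨huT, huS⟩, he⟩
    have hut : u ≠ t := fun h => hs.not_edge_from r (h ▸ he)
    refine ⟨⟨hut, huS⟩, ?_⟩
    by_cases hrT' : r ∈ T
    · rw [collapse_of_mem hrT', hs.clusterEdge_to_iff]
      exact ⟨huT, r, hrT hrT', he⟩
    · rw [collapse_of_notMem hrT']
      exact Or.inl ⟨huT, hrT', he⟩

theorem ClusterSetting.collapse_mem_recs_iff (hs : ClusterSetting E T S t)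
    (hT : SharedParents E T) (hr : r ∈ T ∪ S) (hrT : r ∈ T → r ∈ recs E T) :
    collapse T t r ∈ recs (ClusterEdge E T t) (insert t S) ↔ r ∈ recs E (T ∪ S) := by
  change _ ∧ Set.Nonempty {u | u ∉ insert t S ∧ _} ↔ _ ∧ Set.Nonempty {u | u ∉ T ∪ S ∧ E u r}
  rw [hs.parents_collapse hT hr hrT]
  exact and_congr_left fun _ => iff_of_true (hs.collapse_mem hr) hr

theorem ClusterSetting.collapse_mem_emis_iff (hs : ClusterSetting E T S t)
    (hT : SharedParents (swap E) T) (hr : r ∈ T ∪ S) (hrT : r ∈ T → r ∈ emis E T) :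
    collapse T t r ∈ emis (ClusterEdge E T t) (insert t S) ↔ r ∈ emis E (T ∪ S) := by
  simpa only [clusterEdge_swap, recs_swap] using hs.reverse.collapse_mem_recs_iff hT hr hrT

theorem ClusterSetting.mem_recs_iff (hs : ClusterSetting E T S t) (hT : SharedParents E T)
    (hx : x ∈ S) : x ∈ recs (ClusterEdge E T t) (insert t S) ↔ x ∈ recs E (T ∪ S) := by
  have hxT := hs.notMem_of_mem hx
  simpa only [collapse_of_notMem hxT] using
    hs.collapse_mem_recs_iff hT (Or.inr hx) fun h => absurd h hxT

theorem ClusterSetting.mem_emis_iff (hs : ClusterSetting E T S t)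
    (hT : SharedParents (swap E) T) (hx : x ∈ S) :
    x ∈ emis (ClusterEdge E T t) (insert t S) ↔ x ∈ emis E (T ∪ S) := by
  simpa only [clusterEdge_swap, recs_swap] using hs.reverse.mem_recs_iff hT hx

theorem ClusterSetting.image_collapse_recs (hs : ClusterSetting E T S t) (hT : SharedParents E T) :
    collapse T t '' recs E (T ∪ S) = recs (ClusterEdge E T t) (insert t S) := by
  apply Set.Subset.antisymm
  · rintro _ ⟨r, hr, rfl⟩
    exact (hs.collapse_mem_recs_iff hT hr.1
      (fun hrT => mem_recs_of_subset Set.subset_union_left hrT hr)).2 hr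
  · rintro p ⟨hp, u, hu, he⟩
    rcases Set.mem_insert_iff.1 hp with rfl | hpS
    · obtain ⟨-, r, hr, -⟩ := hs.clusterEdge_to_iff.1 he
      refine ⟨r, (hs.collapse_mem_recs_iff hT (Or.inl hr.1) fun _ => hr).1 ?_, collapse_of_mem hr.1⟩
      rw [collapse_of_mem hr.1]
      exact ⟨hp, u, hu, he⟩
    · exact ⟨p, (hs.mem_recs_iff hT hpS).1 ⟨hp, u, hu, he⟩,
        collapse_of_notMem (hs.notMem_of_mem hpS)⟩

theorem ClusterSetting.image_collapse_emis (hs : ClusterSetting E T S t)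
    (hT : SharedParents (swap E) T) :
    collapse T t '' emis E (T ∪ S) = emis (ClusterEdge E T t) (insert t S) := by
  simpa only [clusterEdge_swap, recs_swap] using hs.reverse.image_collapse_recs hT

theorem ClusterSetting.sharedParents_iff (hs : ClusterSetting E T S t) (hT : SharedParents E T) :
    SharedParents (ClusterEdge E T t) (insert t S) ↔ SharedParents E (T ∪ S) := by
  have hpar : ∀ r ∈ recs E (T ∪ S), {u | u ∉ insert t S ∧ ClusterEdge E T t u (collapse T t r)} =
      {u | u ∉ T ∪ S ∧ E u r} := fun r hr =>
    hs.parents_collapse hT hr.1 fun hrT => mem_recs_of_subset Set.subset_union_left hrT hr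
  unfold SharedParents
  rw [← hs.image_collapse_recs hT]
  constructor
  · intro h r₁ h₁ r₂ h₂
    rw [← hpar r₁ h₁, ← hpar r₂ h₂]
    exact h _ (Set.mem_image_of_mem _ h₁) _ (Set.mem_image_of_mem _ h₂)
  · rintro h _ ⟨r₁, h₁, rfl⟩ _ ⟨r₂, h₂, rfl⟩
    rw [hpar r₁ h₁, hpar r₂ h₂]
    exact h r₁ h₁ r₂ h₂

/-- Over `t` only receivers of `T` are admitted: from a receiver, `RecsReachEmis` and the shared
children of the emitters lead to every child of `t`. -/
def LiesOver (E : α → α → Prop) (T : Set α) (t x a : α) : Prop :=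
  (a = t → x ∈ recs E T) ∧ (a ≠ t → x = a)

theorem ClusterSetting.liesOver_collapse (hs : ClusterSetting E T S t) (hr : r ∈ T ∪ S)
    (hrT : r ∈ T → r ∈ recs E T) : LiesOver E T t r (collapse T t r) := by
  by_cases hr' : r ∈ T
  · rw [collapse_of_mem hr']
    exact ⟨fun _ => hrT hr', fun h => absurd rfl h⟩
  · rw [collapse_of_notMem hr']
    exact ⟨fun h => absurd h (hs.ne_of_mem (hr.resolve_left hr')), fun _ => rfl⟩

theorem ClusterSetting.exists_liesOver_of_clusterEdge (hs : ClusterSetting E T S t)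
    (hT : IsTransit E T) {a b : α} (hab : ClusterEdge E T t a b) (hx : LiesOver E T t x a) :
    ∃ y, LiesOver E T t y b ∧ ReflTransGen E x y := by
  rcases hab with ⟨-, hbT, he⟩ | ⟨-, hat, rfl, r, hr, he⟩ | ⟨rfl, hbT, hbt, e, he, heb⟩
  · have hbt : b ≠ t := fun h => hs.not_edge_to a (h ▸ he)
    have hat : a ≠ t := fun h => hs.not_edge_from b (h ▸ he)
    exact ⟨b, ⟨fun h => absurd h hbt, fun _ => rfl⟩, hx.2 hat ▸ ReflTransGen.single he⟩
  · exact ⟨r, ⟨fun _ => hr, fun h => absurd rfl h⟩, hx.2 hat ▸ ReflTransGen.single he⟩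
  · obtain ⟨e', he', hxe'⟩ := hT.recsReachEmis ⟨e, he⟩ x (hx.1 rfl)
    exact ⟨b, ⟨fun h => absurd h hbt, fun _ => rfl⟩,
      hxe'.tail (hT.sharedChildren.edge he he' hbT heb)⟩

theorem ClusterSetting.exists_liesOver_of_reflTransGen (hs : ClusterSetting E T S t)
    (hT : IsTransit E T) {a b : α} (hab : ReflTransGen (ClusterEdge E T t) a b)
    (hx : LiesOver E T t x a) : ∃ y, LiesOver E T t y b ∧ ReflTransGen E x y := by
  induction hab with
  | refl => exact ⟨x, hx, ReflTransGen.refl⟩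
  | tail _ hcb ih =>
    obtain ⟨y, hy, hxy⟩ := ih
    obtain ⟨z, hz, hyz⟩ := hs.exists_liesOver_of_clusterEdge hT hcb hy
    exact ⟨z, hz, hxy.trans hyz⟩

theorem ClusterSetting.exists_emis_of_liesOver (hs : ClusterSetting E T S t) (hT : IsTransit E T)
    {b : α} (hb : b ∈ emis (ClusterEdge E T t) (insert t S)) (hy : LiesOver E T t y b) :
    ∃ e ∈ emis E (T ∪ S), ReflTransGen E y e := by
  have hemU := hs.image_collapse_emis hT.sharedChildren
  by_cases hbt : b = t
  · subst hbt
    obtain ⟨v, hv, hvb⟩ := hemU ▸ hb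
    have hvT := hs.mem_of_collapse_eq hv.1 hvb
    obtain ⟨e, he, hye⟩ := hT.recsReachEmis ⟨v, mem_emis_of_subset Set.subset_union_left hvT hv⟩
      y (hy.1 rfl)
    refine ⟨e, (hs.collapse_mem_emis_iff hT.sharedChildren (Or.inl he.1) fun _ => he).1 ?_, hye⟩
    rwa [collapse_of_mem he.1]
  · obtain rfl := hy.2 hbt
    have hyS : y ∈ S := (Set.mem_insert_iff.1 hb.1).resolve_left hbt
    exact ⟨y, (hs.mem_emis_iff hT.sharedChildren hyS).1 hb, ReflTransGen.refl⟩

theorem ClusterSetting.recsReachEmis_iff (hs : ClusterSetting E T S t) (hT : IsTransit E T) :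
    RecsReachEmis (ClusterEdge E T t) (insert t S) ↔ RecsReachEmis E (T ∪ S) := by
  unfold RecsReachEmis
  rw [← hs.image_collapse_recs hT.sharedParents, ← hs.image_collapse_emis hT.sharedChildren,
    Set.image_nonempty]
  constructor
  · intro h hne r hr
    obtain ⟨e', he', hre'⟩ := h hne _ (Set.mem_image_of_mem _ hr)
    obtain ⟨y, hy, hry⟩ := hs.exists_liesOver_of_reflTransGen hT hre'
      (hs.liesOver_collapse hr.1 fun hrT => mem_recs_of_subset Set.subset_union_left hrT hr)
    obtain ⟨e, he, hye⟩ :=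
      hs.exists_emis_of_liesOver hT (hs.image_collapse_emis hT.sharedChildren ▸ he') hy
    exact ⟨e, he, hry.trans hye⟩
  · rintro h hne _ ⟨r, hr, rfl⟩
    obtain ⟨e, he, hre⟩ := h hne r hr
    exact ⟨_, Set.mem_image_of_mem _ he, hs.reflTransGen_collapse hre⟩

theorem ClusterSetting.cutEdge_collapse (hs : ClusterSetting E T S t) (hT : IsTransit E T)
    (h : CutEdge E (T ∪ S) u v) : collapse T t u = collapse T t v ∨
      CutEdge (ClusterEdge E T t) (insert t S) (collapse T t u) (collapse T t v) := by
  obtain ⟨hu, hv, he, hvr, hue⟩ := h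
  by_cases huv : u ∈ T ∧ v ∈ T
  · exact Or.inl ((collapse_of_mem huv.1).trans (collapse_of_mem huv.2).symm)
  have huv' := not_and_or.1 huv
  refine Or.inr ⟨hs.collapse_mem hu, hs.collapse_mem hv, hs.clusterEdge_collapse he huv', ?_, ?_⟩
  · refine mt (hs.collapse_mem_recs_iff hT.sharedParents hv fun hvT => ?_).1 hvr
    exact ⟨hvT, u, huv'.resolve_right (not_not.2 hvT), he⟩
  · refine mt (hs.collapse_mem_emis_iff hT.sharedChildren hu fun huT => ?_).1 hue
    exact ⟨huT, v, huv'.resolve_left (not_not.2 huT), he⟩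

theorem ClusterSetting.reachesPort_collapse (hs : ClusterSetting E T S t) (hT : IsTransit E T)
    (hx : ReachesPort E (T ∪ S) x) :
    ReachesPort (ClusterEdge E T t) (insert t S) (collapse T t x) := by
  obtain ⟨w, hw, hxw⟩ := hx
  refine ⟨collapse T t w, ?_, ReflTransGen.lift' (collapse T t) (fun a b hab => ?_) _ _ hxw⟩
  · rw [← hs.image_collapse_recs hT.sharedParents, ← hs.image_collapse_emis hT.sharedChildren]
    exact hw.imp (Set.mem_image_of_mem _) (Set.mem_image_of_mem _)
  · change ReflTransGen _ (collapse T t a) (collapse T t b)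
    rcases hab with hab | hab <;> rcases hs.cutEdge_collapse hT hab with heq | hcut
    · exact heq ▸ ReflTransGen.refl
    · exact ReflTransGen.single (Or.inl hcut)
    · exact heq ▸ ReflTransGen.refl
    · exact ReflTransGen.single (Or.inr hcut)

def FiberReachesPort (E : α → α → Prop) (T S : Set α) (t a : α) : Prop :=
  ∀ x ∈ T ∪ S, collapse T t x = a → ReachesPort E (T ∪ S) x

theorem fiberReachesPort_swap : FiberReachesPort (swap E) T S t = FiberReachesPort E T S t := by
  unfold FiberReachesPort
  rw [reachesPort_swap]

theorem ClusterSetting.fiberReachesPort_cluster_iff (hs : ClusterSetting E T S t) :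
    FiberReachesPort E T S t t ↔ ∀ x ∈ T, ReachesPort E (T ∪ S) x :=
  ⟨fun h x hx => h x (Or.inl hx) (collapse_of_mem hx),
    fun h x hx hxt => h x (hs.mem_of_collapse_eq hx hxt)⟩

theorem ClusterSetting.fiberReachesPort_iff_of_mem (hs : ClusterSetting E T S t) (ha : u ∈ S) :
    FiberReachesPort E T S t u ↔ ReachesPort E (T ∪ S) u := by
  have huT := hs.notMem_of_mem ha
  refine ⟨fun h => h u (Or.inr ha) (collapse_of_notMem huT), fun h x hx hxu => ?_⟩
  by_cases hxT : x ∈ T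
  · exact absurd ((collapse_of_mem hxT).symm.trans hxu) (hs.ne_of_mem ha).symm
  · rwa [← collapse_of_notMem (t := t) hxT, hxu]

theorem ClusterSetting.fiberReachesPort_of_mem_recs (hs : ClusterSetting E T S t)
    (hT : IsTransit E T) (ha : u ∈ recs (ClusterEdge E T t) (insert t S)) :
    FiberReachesPort E T S t u := by
  rintro x hx rfl
  by_cases hxT : x ∈ T
  · obtain ⟨v, hv, hvx⟩ := hs.image_collapse_recs hT.sharedParents ▸ ha
    have hvT : v ∈ recs E T := mem_recs_of_subset Set.subset_union_left
      (hs.mem_of_collapse_eq hv.1 (hvx.trans (collapse_of_mem hxT))) hv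
    exact hT.reachesPort_of_recs Set.subset_union_left ⟨v, hvT⟩ (fun r hr =>
      reachesPort_of_mem_recs (hT.sharedParents.mem_recs Set.subset_union_left hvT hr hv)) x hxT
  · have hxS := hx.resolve_left hxT
    rw [collapse_of_notMem hxT] at ha
    exact reachesPort_of_mem_recs ((hs.mem_recs_iff hT.sharedParents hxS).1 ha)

theorem ClusterSetting.fiberReachesPort_of_mem_emis (hs : ClusterSetting E T S t)
    (hT : IsTransit E T) (ha : u ∈ emis (ClusterEdge E T t) (insert t S)) :
    FiberReachesPort E T S t u := by
  rw [← fiberReachesPort_swap]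
  exact hs.reverse.fiberReachesPort_of_mem_recs hT.reverse (by rwa [clusterEdge_swap])

theorem ClusterSetting.fiberReachesPort_iff_of_cutEdge_to_cluster (hs : ClusterSetting E T S t)
    (hT : IsTransit E T) (h : CutEdge (ClusterEdge E T t) (insert t S) u t) :
    FiberReachesPort E T S t u ↔ FiberReachesPort E T S t t := by
  obtain ⟨huU, -, hut, htr, hue⟩ := h
  obtain ⟨huT, r₀, hr₀, hur₀⟩ := hs.clusterEdge_to_iff.1 hut
  have huS : u ∈ S := (Set.mem_insert_iff.1 huU).resolve_left
    fun h => hs.not_edge_from r₀ (h ▸ hur₀)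
  have hcut : ∀ r ∈ recs E T, CutEdge E (T ∪ S) u r := fun r hr =>
    ⟨Or.inr huS, Or.inl hr.1, hT.sharedParents.edge hr₀ hr huT hur₀,
      mt (hs.collapse_mem_recs_iff hT.sharedParents (Or.inl hr.1) fun _ => hr).2
        (by rwa [collapse_of_mem hr.1]),
      mt (hs.mem_emis_iff hT.sharedChildren huS).2 hue⟩
  rw [hs.fiberReachesPort_iff_of_mem huS, hs.fiberReachesPort_cluster_iff]
  exact ⟨fun hu => hT.reachesPort_of_recs Set.subset_union_left ⟨r₀, hr₀⟩ fun r hr =>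
      (reachesPort_iff_of_cutEdge (hcut r hr)).1 hu,
    fun hT' => (reachesPort_iff_of_cutEdge (hcut r₀ hr₀)).2 (hT' r₀ hr₀.1)⟩

theorem ClusterSetting.fiberReachesPort_iff_of_cutEdge_from_cluster
    (hs : ClusterSetting E T S t) (hT : IsTransit E T)
    (h : CutEdge (ClusterEdge E T t) (insert t S) t u) :
    FiberReachesPort E T S t u ↔ FiberReachesPort E T S t t := by
  rw [← fiberReachesPort_swap (E := E)]
  exact hs.reverse.fiberReachesPort_iff_of_cutEdge_to_cluster hT.reverse
    (by rwa [clusterEdge_swap, cutEdge_swap])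

theorem ClusterSetting.fiberReachesPort_iff_of_cutEdge (hs : ClusterSetting E T S t)
    (hT : IsTransit E T) {a b : α} (h : CutEdge (ClusterEdge E T t) (insert t S) a b) :
    FiberReachesPort E T S t a ↔ FiberReachesPort E T S t b := by
  by_cases ha : a = t <;> by_cases hb : b = t
  · rw [ha, hb]
  · subst ha
    exact (hs.fiberReachesPort_iff_of_cutEdge_from_cluster hT h).symm
  · subst hb
    exact hs.fiberReachesPort_iff_of_cutEdge_to_cluster hT h
  · obtain ⟨haU, hbU, hab, hbr, hae⟩ := h
    have haS := (Set.mem_insert_iff.1 haU).resolve_left ha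
    have hbS := (Set.mem_insert_iff.1 hbU).resolve_left hb
    have hcut : CutEdge E (T ∪ S) a b := ⟨Or.inr haS, Or.inr hbS,
      ((clusterEdge_iff_of_ne ha hb).1 hab).2.2, mt (hs.mem_recs_iff hT.sharedParents hbS).2 hbr,
      mt (hs.mem_emis_iff hT.sharedChildren haS).2 hae⟩
    rw [hs.fiberReachesPort_iff_of_mem haS, hs.fiberReachesPort_iff_of_mem hbS]
    exact reachesPort_iff_of_cutEdge hcut

theorem ClusterSetting.fiberReachesPort_iff_of_undirReach (hs : ClusterSetting E T S t)
    (hT : IsTransit E T) {a b : α}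
    (h : UndirReach (CutEdge (ClusterEdge E T t) (insert t S)) a b) :
    FiberReachesPort E T S t a ↔ FiberReachesPort E T S t b := by
  induction h with
  | refl => rfl
  | tail _ hbc ih =>
    exact ih.trans (hbc.elim (hs.fiberReachesPort_iff_of_cutEdge hT)
      fun h => (hs.fiberReachesPort_iff_of_cutEdge hT h).symm)

theorem ClusterSetting.reachesPort_iff (hs : ClusterSetting E T S t) (hT : IsTransit E T)
    (hTne : T.Nonempty) :
    (∀ p ∈ insert t S, ReachesPort (ClusterEdge E T t) (insert t S) p) ↔
      ∀ x ∈ T ∪ S, ReachesPort E (T ∪ S) x := by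
  constructor
  · intro h x hx
    obtain ⟨w, hw, hxw⟩ := h _ (hs.collapse_mem hx)
    exact (hs.fiberReachesPort_iff_of_undirReach hT hxw).2
      (hw.elim (hs.fiberReachesPort_of_mem_recs hT) (hs.fiberReachesPort_of_mem_emis hT)) x hx rfl
  · intro h p hp
    obtain ⟨x, hx, rfl⟩ : ∃ x ∈ T ∪ S, collapse T t x = p := by
      rcases Set.mem_insert_iff.1 hp with rfl | hpS
      · obtain ⟨x, hx⟩ := hTne
        exact ⟨x, Or.inl hx, collapse_of_mem hx⟩
      · exact ⟨p, Or.inr hpS, collapse_of_notMem (hs.notMem_of_mem hpS)⟩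
    exact hs.reachesPort_collapse hT (h x hx)

theorem ClusterSetting.isTransit_iff (hs : ClusterSetting E T S t) (hT : IsTransit E T)
    (hTne : T.Nonempty) :
    IsTransit (ClusterEdge E T t) (insert t S) ↔ IsTransit E (T ∪ S) := by
  have h₃ := hs.sharedParents_iff hT.sharedParents
  have h₄ : SharedParents (swap (ClusterEdge E T t)) (insert t S) ↔
      SharedParents (swap E) (T ∪ S) := by
    simpa only [clusterEdge_swap] using hs.reverse.sharedParents_iff hT.sharedChildren
  have h₅ := hs.reachesPort_iff hT hTne
  have h₆ := hs.recsReachEmis_iff hT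
  have h₇ : RecsReachEmis (swap (ClusterEdge E T t)) (insert t S) ↔
      RecsReachEmis (swap E) (T ∪ S) := by
    simpa only [clusterEdge_swap] using hs.reverse.recsReachEmis_iff hT.reverse
  exact ⟨fun h => ⟨h₃.1 h.1, h₄.1 h.2, h₅.1 h.3, h₆.1 h.4, h₇.1 h.5⟩,
    fun h => ⟨h₃.2 h.1, h₄.2 h.2, h₅.2 h.3, h₆.2 h.4, h₇.2 h.5⟩⟩

theorem insert_ssubset_clusterVerts_iff {V : Set α} (ht : t ∉ V) (hTV : T ⊆ V)
    (hS : S ⊆ V \ T) : insert t S ⊂ ClusterVerts V T t ↔ T ∪ S ⊂ V := by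
  rw [Set.ssubset_iff_of_subset, Set.ssubset_iff_of_subset (Set.union_subset hTV
    fun x hx => (hS hx).1)]
  · simp only [ClusterVerts, Set.mem_union, Set.mem_sdiff, Set.mem_singleton_iff,
      Set.mem_insert_iff, not_or]
    constructor
    · rintro ⟨x, hx | rfl, hxt, hxS⟩
      · exact ⟨x, hx.1, hx.2, hxS⟩
      · exact absurd rfl hxt
    · rintro ⟨x, hxV, hxT, hxS⟩
      exact ⟨x, Or.inl ⟨hxV, hxT⟩, fun h => ht (h ▸ hxV), hxS⟩
  · rintro x (rfl | hx)
    · exact Or.inr rfl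
    · exact Or.inl (hS hx)

end Clustering

end TransitCluster

open TransitCluster

/-- modularity of transit clusters. -/
theorem transit_cluster_modularity
    (V : Set α) (E : α → α → Prop) (T S : Set α) (t : α)
    (hdag : IsDAG V E)
    (ht : t ∉ V)
    (hT : IsTransitCluster V E T)
    (hS : S ⊆ V \ T) :
    IsTransitCluster (ClusterVerts V T t) (ClusterEdge E T t) (insert t S) ↔
      IsTransitCluster V E (T ∪ S) := by
  have hs := ClusterSetting.of_edgesIn hdag.2.1 ht hS
  obtain ⟨hTne, hTV, hT⟩ := isTransitCluster_iff.1 hT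
  rw [isTransitCluster_iff, isTransitCluster_iff, hs.isTransit_iff hT hTne,
    insert_ssubset_clusterVerts_iff ht hTV.subset hS]
  exact and_congr_left fun _ =>
    iff_of_true (Set.insert_nonempty t S) (hTne.mono Set.subset_union_left)
end

section
/- Let S and T be disjoint transit clusters in a DAG G. If the set of strict external parents of the receivers of S equals that of the receivers of T, and the set of strict external children of the emitters of S equals that of the emitters of T, then S ∪ T is a transit cluster in G. (Union of transit clusters.) -/
variable {α : Type*}

/-- Strict parents of a set `A`: parents of members of `A` lying outside `A`. -/
def StrictPa (E : α → α → Prop) (A : Set α) : Set α :=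
  {u | u ∉ A ∧ ∃ a ∈ A, E u a}

/-- Strict children of a set `A`: children of members of `A` lying outside `A`. -/
def StrictCh (E : α → α → Prop) (A : Set α) : Set α :=
  {u | u ∉ A ∧ ∃ a ∈ A, E a u}


/-! The crux is that the receivers of `S ∪ T` are exactly those of `S` and of `T`. If a
receiver `w` of `S` had all its external parents in `T`, there would be an edge from `T`
into `S`, and chasing parents through `StrictPa (recs S) = StrictPa (recs T)` yields an edge
from `S` into `T` as well; edges in both directions between disjoint transit clusters close
a directed cycle through an emitter of each. With receivers and emitters identified, the
remaining conditions transfer from `S` and `T`, the equalities of strict parents and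
children matching the external neighbourhoods of the two clusters. Emitter statements are
receiver statements for the reversed graph. -/

open Relation Function

variable {V : Set α} {E : α → α → Prop} {S T U : Set α}

theorem Acyclic.swap (h : Acyclic E) : Acyclic (swap E) :=
  fun v hv => h v (transGen_swap.mp hv)

theorem UndirReach.mono {R R' : α → α → Prop} (h : ∀ a b, R a b → R' a b) {a b : α}
    (hab : UndirReach R a b) : UndirReach R' a b :=
  ReflTransGen.mono (fun x y => Or.imp (h x y) (h y x)) a b hab

theorem undirReach_swap (R : α → α → Prop) : UndirReach (swap R) = UndirReach R :=
  congrArg ReflTransGen (symmGen_swap R)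

theorem cutEdge_swap : CutEdge (swap E) T = swap (CutEdge E T) := by
  ext a b
  simp only [CutEdge, swap]
  tauto

theorem cutEdge_mono (hTU : T ⊆ U) {a b : α} (h : CutEdge E T a b) : CutEdge E U a b := by
  obtain ⟨ha, hb, hab, hb_rec, ha_emi⟩ := h
  refine ⟨hTU ha, hTU hb, hab, ?_, ?_⟩
  · rintro ⟨-, u, hu, hub⟩
    exact hb_rec ⟨hb, u, fun h => hu (hTU h), hub⟩
  · rintro ⟨-, u, hu, hau⟩
    exact ha_emi ⟨ha, u, fun h => hu (hTU h), hau⟩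

theorem IsTransitCluster.swap (h : IsTransitCluster V E T) : IsTransitCluster V (swap E) T := by
  obtain ⟨hne, hTV, hpar, hch, hreach, hdesc, hanc⟩ := h
  refine ⟨hne, hTV, hch, hpar, ?_, ?_, ?_⟩
  · intro x hx
    obtain ⟨w, hw, hxw⟩ := hreach x hx
    exact ⟨w, hw.symm, by rwa [cutEdge_swap, undirReach_swap]⟩
  · intro hrec e he
    obtain ⟨r, hr, hre⟩ := hanc hrec e he
    exact ⟨r, hr, reflTransGen_swap.mpr hre⟩
  · intro hemi r hr
    obtain ⟨e, he, hre⟩ := hdesc hemi r hr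
    exact ⟨e, he, reflTransGen_swap.mpr hre⟩

theorem IsTransitCluster.edge_of_edge_recs (h : IsTransitCluster V E T) {r₁ r₂ u : α}
    (hr₁ : r₁ ∈ recs E T) (hr₂ : r₂ ∈ recs E T) (hu : u ∉ T) (hur₁ : E u r₁) : E u r₂ := by
  have hmem : u ∈ {x | x ∉ T ∧ E x r₁} := ⟨hu, hur₁⟩
  rw [h.2.2.1 r₁ hr₁ r₂ hr₂] at hmem
  exact hmem.2

theorem IsTransitCluster.extParents_eq (h : IsTransitCluster V E T) {r : α}
    (hr : r ∈ recs E T) (hTU : T ⊆ U) :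
    {u | u ∉ U ∧ E u r} = StrictPa E (recs E T) \ U := by
  ext u
  constructor
  · rintro ⟨huU, hur⟩
    exact ⟨⟨fun hu => huU (hTU hu.1), r, hr, hur⟩, huU⟩
  · rintro ⟨⟨-, r', hr', hur'⟩, huU⟩
    have huT : u ∉ T := fun hu => huU (hTU hu)
    exact ⟨huU, h.edge_of_edge_recs hr' hr huT hur'⟩

theorem IsTransitCluster.recs_union_emis_nonempty (h : IsTransitCluster V E T) :
    (recs E T ∪ emis E T).Nonempty := by
  obtain ⟨x, hx⟩ := h.1
  obtain ⟨w, hw, -⟩ := h.2.2.2.2.1 x hx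
  exact ⟨w, hw⟩

theorem ssubset_of_recs_union_emis_nonempty (hE : EdgesIn V E) (hTV : T ⊆ V)
    (h : (recs E T ∪ emis E T).Nonempty) : T ⊂ V := by
  rw [Set.ssubset_iff_of_subset hTV]
  obtain ⟨w, ⟨-, u, hu, huw⟩ | ⟨-, u, hu, hwu⟩⟩ := h
  · exact ⟨u, (hE u w huw).1, hu⟩
  · exact ⟨u, (hE w u hwu).2, hu⟩

theorem recs_union_subset : recs E (S ∪ T) ⊆ recs E S ∪ recs E T := by
  rintro v ⟨hv | hv, u, hu, huv⟩
  · exact Or.inl ⟨hv, u, fun h => hu (Or.inl h), huv⟩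
  · exact Or.inr ⟨hv, u, fun h => hu (Or.inr h), huv⟩

theorem nonempty_strictCh_emis_iff : (StrictCh E (emis E T)).Nonempty ↔ (emis E T).Nonempty := by
  constructor
  · rintro ⟨-, -, e, he, -⟩
    exact ⟨e, he⟩
  · rintro ⟨e, he⟩
    obtain ⟨c, hc, hec⟩ := he.2
    exact ⟨c, fun hc' => hc hc'.1, e, he, hec⟩

/-- The edges `p → r` and `u → w` close the cycle `w →* g → r →* f → w`, where `g` is an emitter of `S` below `w` (it shares `p`'s children)
and `f` an emitter of `T` below `r` (it shares `u`'s children). -/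
theorem IsTransitCluster.not_edges_both_ways (hacyc : Acyclic E) (hS : IsTransitCluster V E S)
    (hT : IsTransitCluster V E T) (hdisj : Disjoint S T) {p r u w : α}
    (hp : p ∈ S) (hr : r ∈ T) (hpr : E p r) (hu : u ∈ T) (hw : w ∈ S) (huw : E u w) :
    False := by
  have hrS : r ∉ S := Set.disjoint_right.mp hdisj hr
  have hwT : w ∉ T := Set.disjoint_left.mp hdisj hw
  have hp_emi : p ∈ emis E S := ⟨hp, r, hrS, hpr⟩
  have hu_emi : u ∈ emis E T := ⟨hu, w, hwT, huw⟩
  have hw_rec : w ∈ recs E S := ⟨hw, u, Set.disjoint_right.mp hdisj hu, huw⟩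
  have hr_rec : r ∈ recs E T := ⟨hr, p, Set.disjoint_left.mp hdisj hp, hpr⟩
  obtain ⟨g, hg, hwg⟩ := hS.2.2.2.2.2.1 ⟨p, hp_emi⟩ w hw_rec
  obtain ⟨f, hf, hrf⟩ := hT.2.2.2.2.2.1 ⟨u, hu_emi⟩ r hr_rec
  have hgr : E g r := hS.swap.edge_of_edge_recs hp_emi hg hrS hpr
  have hfw : E f w := hT.swap.edge_of_edge_recs hu_emi hf hwT huw
  exact hacyc w ((TransGen.tail' hwg hgr).trans (TransGen.tail' hrf hfw))

theorem IsTransitCluster.exists_edge_of_extParents_subset (hS : IsTransitCluster V E S)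
    (hpa : StrictPa E (recs E S) = StrictPa E (recs E T)) {w : α} (hw : w ∈ recs E S)
    (hpar : ∀ u, u ∉ S → E u w → u ∈ T) : ∃ p ∈ S, ∃ r ∈ T, E p r := by
  obtain ⟨u, huS, huw⟩ := hw.2
  have hu : u ∈ StrictPa E (recs E T) := hpa ▸ ⟨fun hu => huS hu.1, w, hw, huw⟩
  obtain ⟨-, r, ⟨hrT, p, hpT, hpr⟩, -⟩ := hu
  have hp : p ∈ StrictPa E (recs E S) :=
    hpa ▸ ⟨fun hp => hpT hp.1, r, ⟨hrT, p, hpT, hpr⟩, hpr⟩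
  obtain ⟨-, w', hw', hpw'⟩ := hp
  refine ⟨p, ?_, r, hrT, hpr⟩
  by_contra hpS
  exact hpT (hpar p hpS (hS.edge_of_edge_recs hw' hw hpS hpw'))

theorem IsTransitCluster.recs_subset_recs_union (hacyc : Acyclic E)
    (hS : IsTransitCluster V E S) (hT : IsTransitCluster V E T) (hdisj : Disjoint S T)
    (hpa : StrictPa E (recs E S) = StrictPa E (recs E T)) : recs E S ⊆ recs E (S ∪ T) := by
  intro w hw
  by_contra hwU
  have hpar : ∀ u, u ∉ S → E u w → u ∈ T := fun u huS huw => by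
    by_contra huT
    exact hwU ⟨Or.inl hw.1, u, fun hu => hu.elim huS huT, huw⟩
  obtain ⟨p, hp, r, hr, hpr⟩ := hS.exists_edge_of_extParents_subset hpa hw hpar
  obtain ⟨u, huS, huw⟩ := hw.2
  exact hS.not_edges_both_ways hacyc hT hdisj hp hr hpr (hpar u huS huw) hw.1 huw

theorem IsTransitCluster.recs_union (hacyc : Acyclic E)
    (hS : IsTransitCluster V E S) (hT : IsTransitCluster V E T) (hdisj : Disjoint S T)
    (hpa : StrictPa E (recs E S) = StrictPa E (recs E T)) :
    recs E (S ∪ T) = recs E S ∪ recs E T := by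
  refine recs_union_subset.antisymm (Set.union_subset ?_ ?_)
  · exact hS.recs_subset_recs_union hacyc hT hdisj hpa
  · rw [Set.union_comm]
    exact hT.recs_subset_recs_union hacyc hS hdisj.symm hpa.symm

theorem IsTransitCluster.union_extParents_eq (hS : IsTransitCluster V E S)
    (hT : IsTransitCluster V E T) (hrecs : recs E (S ∪ T) = recs E S ∪ recs E T)
    (hpa : StrictPa E (recs E S) = StrictPa E (recs E T)) :
    ∀ r₁ ∈ recs E (S ∪ T), ∀ r₂ ∈ recs E (S ∪ T),
      {u | u ∉ S ∪ T ∧ E u r₁} = {u | u ∉ S ∪ T ∧ E u r₂} := by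
  have key : ∀ r ∈ recs E (S ∪ T), {u | u ∉ S ∪ T ∧ E u r} = StrictPa E (recs E S) \ (S ∪ T) := by
    intro r hr
    rw [hrecs] at hr
    rcases hr with hr | hr
    · exact hS.extParents_eq hr Set.subset_union_left
    · rw [hpa]
      exact hT.extParents_eq hr Set.subset_union_right
  intro r₁ hr₁ r₂ hr₂
  rw [key r₁ hr₁, key r₂ hr₂]

theorem IsTransitCluster.union_exists_emis_reach (hS : IsTransitCluster V E S)
    (hT : IsTransitCluster V E T) (hrecs : recs E (S ∪ T) = recs E S ∪ recs E T)
    (hemis : emis E (S ∪ T) = emis E S ∪ emis E T)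
    (hch : StrictCh E (emis E S) = StrictCh E (emis E T)) :
    (emis E (S ∪ T)).Nonempty →
      ∀ r ∈ recs E (S ∪ T), ∃ e ∈ emis E (S ∪ T), ReflTransGen E r e := by
  have hiff : (emis E S).Nonempty ↔ (emis E T).Nonempty := by
    rw [← nonempty_strictCh_emis_iff, hch, nonempty_strictCh_emis_iff]
  intro hne r hr
  rw [hemis, Set.union_nonempty, ← hiff, or_self] at hne
  rw [hemis]
  rw [hrecs] at hr
  rcases hr with hr | hr
  · obtain ⟨e, he, hre⟩ := hS.2.2.2.2.2.1 hne r hr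
    exact ⟨e, Or.inl he, hre⟩
  · obtain ⟨e, he, hre⟩ := hT.2.2.2.2.2.1 (hiff.mp hne) r hr
    exact ⟨e, Or.inr he, hre⟩

theorem IsTransitCluster.exists_reach_of_subset (hT : IsTransitCluster V E T) (hTU : T ⊆ U)
    (hrec : recs E T ⊆ recs E U) (hemi : emis E T ⊆ emis E U) :
    ∀ x ∈ T, ∃ w, (w ∈ recs E U ∨ w ∈ emis E U) ∧ UndirReach (CutEdge E U) x w := by
  intro x hx
  obtain ⟨w, hw, hxw⟩ := hT.2.2.2.2.1 x hx
  exact ⟨w, hw.imp (@hrec w) (@hemi w), hxw.mono fun _ _ => cutEdge_mono hTU⟩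

/-- union of transit clusters. -/
theorem transit_cluster_union
    (V : Set α) (E : α → α → Prop) (S T : Set α)
    (hdag : IsDAG V E)
    (hS : IsTransitCluster V E S)
    (hT : IsTransitCluster V E T)
    (hdisj : Disjoint S T)
    (hpa : StrictPa E (recs E S) = StrictPa E (recs E T))
    (hch : StrictCh E (emis E S) = StrictCh E (emis E T)) :
    IsTransitCluster V E (S ∪ T) := by
  obtain ⟨-, hedges, hacyc⟩ := hdag
  have hrecs : recs E (S ∪ T) = recs E S ∪ recs E T := hS.recs_union hacyc hT hdisj hpa
  have hemis : emis E (S ∪ T) = emis E S ∪ emis E T :=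
    hS.swap.recs_union hacyc.swap hT.swap hdisj hch
  refine ⟨hS.1.mono Set.subset_union_left, ?_, hS.union_extParents_eq hT hrecs hpa,
    hS.swap.union_extParents_eq hT.swap hemis hch, ?_,
    hS.union_exists_emis_reach hT hrecs hemis hch, ?_⟩
  · refine ssubset_of_recs_union_emis_nonempty hedges (Set.union_subset hS.2.1.1 hT.2.1.1)
      (hS.recs_union_emis_nonempty.mono ?_)
    rw [hrecs, hemis]
    exact Set.union_subset_union Set.subset_union_left Set.subset_union_left
  · rintro x (hx | hx)
    · exact hS.exists_reach_of_subset Set.subset_union_left (hrecs ▸ Set.subset_union_left)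
        (hemis ▸ Set.subset_union_left) x hx
    · exact hT.exists_reach_of_subset Set.subset_union_right (hrecs ▸ Set.subset_union_right)
        (hemis ▸ Set.subset_union_right) x hx
  · intro hne e he
    obtain ⟨r, hr, hre⟩ := hS.swap.union_exists_emis_reach hT.swap hemis hrecs hpa hne e he
    exact ⟨r, hr, reflTransGen_swap.mp hre⟩
end

section
/- Let T be a transit cluster in a DAG G = (V,E). If T is not a transit component (i.e., not connected in the induced subgraph G[T]), then there exists a transit cluster S and a transit component R in G such that T = S ∪ R and S ∩ R = ∅. (Transit cluster decomposition.) -/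
variable {α : Type*}

/-! A disconnected transit cluster splits as one connected component `R` of `G[T]` and the
rest `S = T \ R`. Both are unions of components of `G[T]`, so no edge runs between them: the
external parents and children of their receivers and emitters are those of `T`, the
`G[T^=]`-paths of `T` stay inside each part, and a directed path from a receiver to an
emitter of `T` that leaves the part does so through an emitter of the part (dually for
receivers). Hence every union of components of a transit cluster is again a transit cluster. -/

namespace Relation

theorem ReflTransGen.mem_and_of_invariant {r r' : α → α → Prop} {A : Set α}
    (h : ∀ a b, a ∈ A → r a b → b ∈ A ∧ r' a b) {a b : α}
    (hab : ReflTransGen r a b) (ha : a ∈ A) : b ∈ A ∧ ReflTransGen r' a b := by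
  induction hab with
  | refl => exact ⟨ha, .refl⟩
  | tail _ hcd ih =>
    obtain ⟨hc, hac⟩ := ih
    obtain ⟨hd, hcd'⟩ := h _ _ hc hcd
    exact ⟨hd, hac.tail hcd'⟩

end Relation

open Relation

theorem UndirReach.symm {E : α → α → Prop} {a b : α} (h : UndirReach E a b) :
    UndirReach E b a :=
  have : Std.Symm fun a b => E a b ∨ E b a := ⟨fun _ _ h' => h'.symm⟩
  ReflTransGen.stdSymm.symm a b h

theorem exists_mem_emis_of_reflTransGen {E : α → α → Prop} {A : Set α} {a b : α}
    (h : ReflTransGen E a b) (ha : a ∈ A) (hb : b ∉ A) :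
    ∃ m ∈ emis E A, ReflTransGen E a m := by
  induction h using ReflTransGen.head_induction_on with
  | refl => exact absurd ha hb
  | @head x c hxc _ ih =>
    by_cases hc : c ∈ A
    · obtain ⟨m, hm, hcm⟩ := ih hc
      exact ⟨m, hm, hcm.head hxc⟩
    · exact ⟨x, ⟨ha, c, hc, hxc⟩, .refl⟩

theorem exists_mem_recs_of_reflTransGen {E : α → α → Prop} {A : Set α} {a b : α}
    (h : ReflTransGen E a b) (ha : a ∉ A) (hb : b ∈ A) :
    ∃ m ∈ recs E A, ReflTransGen E m b := by
  induction h with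
  | refl => exact absurd hb ha
  | @tail c d _ hcd ih =>
    by_cases hc : c ∈ A
    · obtain ⟨m, hm, hmc⟩ := ih hc
      exact ⟨m, hm, hmc.tail hcd⟩
    · exact ⟨d, ⟨hb, c, hc, hcd⟩, .refl⟩

/-- `A` is a union of connected components of `G[T]`: no edge of `G[T]` leaves it. -/
def IsComponentUnion (E : α → α → Prop) (T A : Set α) : Prop :=
  A ⊆ T ∧ ∀ ⦃u v⦄, E u v → u ∈ T → v ∈ T → (u ∈ A ↔ v ∈ A)

namespace IsComponentUnion

variable {E : α → α → Prop} {T A : Set α}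

theorem diff (hA : IsComponentUnion E T A) : IsComponentUnion E T (T \ A) :=
  ⟨Set.sdiff_subset, fun _ _ huv hu hv => by
    simp only [Set.mem_sdiff, hu, hv, true_and, hA.2 huv hu hv]⟩

theorem notMem_iff_of_adj (hA : IsComponentUnion E T A) {u v : α} (hv : v ∈ A)
    (h : E u v ∨ E v u) : u ∉ A ↔ u ∉ T := by
  refine ⟨fun huA huT => huA ?_, fun huT huA => huT (hA.1 huA)⟩
  rcases h with h | h
  · exact (hA.2 h huT (hA.1 hv)).2 hv
  · exact (hA.2 h (hA.1 hv) huT).1 hv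

theorem recs_eq (hA : IsComponentUnion E T A) : recs E A = recs E T ∩ A := by
  ext v
  refine ⟨fun ⟨hv, u, hu, huv⟩ => ⟨⟨hA.1 hv, u, ?_, huv⟩, hv⟩,
    fun ⟨⟨_, u, hu, huv⟩, hv⟩ => ⟨hv, u, fun h => hu (hA.1 h), huv⟩⟩
  exact (hA.notMem_iff_of_adj hv (.inl huv)).1 hu

theorem emis_eq (hA : IsComponentUnion E T A) : emis E A = emis E T ∩ A := by
  ext v
  refine ⟨fun ⟨hv, u, hu, hvu⟩ => ⟨⟨hA.1 hv, u, ?_, hvu⟩, hv⟩,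
    fun ⟨⟨_, u, hu, hvu⟩, hv⟩ => ⟨hv, u, fun h => hu (hA.1 h), hvu⟩⟩
  exact (hA.notMem_iff_of_adj hv (.inr hvu)).1 hu

theorem external_parents_eq (hA : IsComponentUnion E T A) {r : α} (hr : r ∈ A) :
    {u | u ∉ A ∧ E u r} = {u | u ∉ T ∧ E u r} := by
  ext u
  exact and_congr_left fun h => hA.notMem_iff_of_adj hr (.inl h)

theorem external_children_eq (hA : IsComponentUnion E T A) {e : α} (he : e ∈ A) :
    {u | u ∉ A ∧ E e u} = {u | u ∉ T ∧ E e u} := by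
  ext u
  exact and_congr_left fun h => hA.notMem_iff_of_adj he (.inr h)

theorem undirReach_cutEdge (hA : IsComponentUnion E T A) {a b : α}
    (h : UndirReach (CutEdge E T) a b) (ha : a ∈ A) :
    b ∈ A ∧ UndirReach (CutEdge E A) a b := by
  refine ReflTransGen.mem_and_of_invariant ?_ h ha
  rintro c d hc (⟨hcT, hdT, hcd, hdr, hce⟩ | ⟨hdT, hcT, hdc, hcr, hde⟩)
  · have hd := (hA.2 hcd hcT hdT).1 hc
    refine ⟨hd, .inl ⟨hc, hd, hcd, ?_, ?_⟩⟩
    · rw [hA.recs_eq]; exact fun h => hdr h.1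
    · rw [hA.emis_eq]; exact fun h => hce h.1
  · have hd := (hA.2 hdc hdT hcT).2 hc
    refine ⟨hd, .inr ⟨hd, hc, hdc, ?_, ?_⟩⟩
    · rw [hA.recs_eq]; exact fun h => hcr h.1
    · rw [hA.emis_eq]; exact fun h => hde h.1

theorem isTransitCluster {V : Set α} (hA : IsComponentUnion E T A)
    (hT : IsTransitCluster V E T) (hne : A.Nonempty) : IsTransitCluster V E A := by
  obtain ⟨-, hTV, hpar, hchi, hcon, hre, her⟩ := hT
  have hrecs := hA.recs_eq
  have hemis := hA.emis_eq
  refine ⟨hne, Set.ssubset_of_subset_of_ssubset hA.1 hTV, ?_, ?_, ?_, ?_, ?_⟩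
  · rw [hrecs]
    rintro r₁ ⟨hr₁, hr₁A⟩ r₂ ⟨hr₂, hr₂A⟩
    rw [hA.external_parents_eq hr₁A, hA.external_parents_eq hr₂A]
    exact hpar r₁ hr₁ r₂ hr₂
  · rw [hemis]
    rintro e₁ ⟨he₁, he₁A⟩ e₂ ⟨he₂, he₂A⟩
    rw [hA.external_children_eq he₁A, hA.external_children_eq he₂A]
    exact hchi e₁ he₁ e₂ he₂
  · intro x hx
    obtain ⟨w, hw, hxw⟩ := hcon x (hA.1 hx)
    obtain ⟨hwA, hxw'⟩ := hA.undirReach_cutEdge hxw hx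
    refine ⟨w, ?_, hxw'⟩
    rw [hrecs, hemis]
    exact hw.imp (⟨·, hwA⟩) (⟨·, hwA⟩)
  · rintro ⟨e₀, he₀⟩ r hr
    rw [hemis] at he₀ ⊢
    rw [hrecs] at hr
    obtain ⟨e, he, hre⟩ := hre ⟨e₀, he₀.1⟩ r hr.1
    by_cases heA : e ∈ A
    · exact ⟨e, ⟨he, heA⟩, hre⟩
    · rw [← hemis]
      exact exists_mem_emis_of_reflTransGen hre hr.2 heA
  · rintro ⟨r₀, hr₀⟩ e he
    rw [hrecs] at hr₀ ⊢
    rw [hemis] at he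
    obtain ⟨r, hr, hre⟩ := her ⟨r₀, hr₀.1⟩ e he.1
    by_cases hrA : r ∈ A
    · exact ⟨r, ⟨hr, hrA⟩, hre⟩
    · rw [← hrecs]
      exact exists_mem_recs_of_reflTransGen hre hrA he.2

end IsComponentUnion

def InducedEdge (E : α → α → Prop) (T : Set α) (a b : α) : Prop :=
  a ∈ T ∧ b ∈ T ∧ E a b

def componentIn (E : α → α → Prop) (T : Set α) (u : α) : Set α :=
  {y | y ∈ T ∧ UndirReach (InducedEdge E T) u y}

theorem isComponentUnion_componentIn (E : α → α → Prop) (T : Set α) (u : α) :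
    IsComponentUnion E T (componentIn E T u) :=
  ⟨fun _ hy => hy.1, fun ⦃_ _⦄ hab ha hb =>
    ⟨fun ⟨_, hua⟩ => ⟨hb, hua.tail (.inl ⟨ha, hb, hab⟩)⟩,
      fun ⟨_, hub⟩ => ⟨ha, hub.tail (.inr ⟨ha, hb, hab⟩)⟩⟩⟩

theorem undirReach_inducedEdge_componentIn {E : α → α → Prop} {T : Set α} {u y : α}
    (hu : u ∈ T) (hy : y ∈ componentIn E T u) :
    UndirReach (InducedEdge E (componentIn E T u)) u y := by
  have hC := isComponentUnion_componentIn E T u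
  have huC : u ∈ componentIn E T u := ⟨hu, .refl⟩
  refine (ReflTransGen.mem_and_of_invariant ?_ hy.2 huC).2
  rintro c d hc (⟨hcT, hdT, hcd⟩ | ⟨hdT, hcT, hdc⟩)
  · have hd := (hC.2 hcd hcT hdT).1 hc
    exact ⟨hd, .inl ⟨hc, hd, hcd⟩⟩
  · have hd := (hC.2 hdc hdT hcT).2 hc
    exact ⟨hd, .inr ⟨hd, hc, hdc⟩⟩

theorem componentIn_connected {E : α → α → Prop} {T : Set α} {u : α} (hu : u ∈ T) :
    ∀ x ∈ componentIn E T u, ∀ y ∈ componentIn E T u,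
      UndirReach (InducedEdge E (componentIn E T u)) x y :=
  fun _ hx _ hy =>
    (undirReach_inducedEdge_componentIn hu hx).symm.trans
      (undirReach_inducedEdge_componentIn hu hy)

theorem transit_cluster_decomposition_general
    (V : Set α) (E : α → α → Prop) (T : Set α)
    (hT : IsTransitCluster V E T)
    (hnc : ¬ IsTransitComponent V E T) :
    ∃ S R : Set α, IsTransitCluster V E S ∧ IsTransitComponent V E R ∧
      T = S ∪ R ∧ S ∩ R = ∅ := by
  obtain ⟨u, hu, v, hv, huv⟩ : ∃ u ∈ T, ∃ v ∈ T, ¬ UndirReach (InducedEdge E T) u v := by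
    by_contra! h
    exact hnc ⟨hT, h⟩
  set R := componentIn E T u
  have hR : IsComponentUnion E T R := isComponentUnion_componentIn E T u
  have hvS : v ∈ T \ R := ⟨hv, fun h => huv h.2⟩
  refine ⟨T \ R, R, hR.diff.isTransitCluster hT ⟨v, hvS⟩,
    ⟨hR.isTransitCluster hT ⟨u, hu, .refl⟩, componentIn_connected hu⟩,
    (Set.sdiff_union_of_subset hR.1).symm, Set.sdiff_inter_self⟩

/-- transit cluster decomposition. -/
theorem transit_cluster_decomposition
    (V : Set α) (E : α → α → Prop) (T : Set α)
    (hdag : IsDAG V E)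
    (hT : IsTransitCluster V E T)
    (hnc : ¬ IsTransitComponent V E T) :
    ∃ S R : Set α, IsTransitCluster V E S ∧ IsTransitComponent V E R ∧
      T = S ∪ R ∧ S ∩ R = ∅ :=
  transit_cluster_decomposition_general V E T hT hnc
end

section
/- Let T be a transit cluster in a DAG G. If a set R ⊆ T is connected in G[R] (viewing edges undirected) and R is not connected to T \ R in G[T], then both R and T \ R are transit clusters in G. -/
variable {α : Type*}

lemma aux_split (V : Set α) (E : α → α → Prop) (T S : Set α)
    (hT : IsTransitCluster V E T)
    (hST : S ⊆ T)
    (hSne : S.Nonempty)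
    (hproper : ∃ x ∈ V, x ∉ S)
    (hinv : ∀ u v, u ∈ T → v ∈ T → E u v → (u ∈ S ↔ v ∈ S)) :
    IsTransitCluster V E S := by
  obtain ⟨hTne, hTV, hrecT, hemiT, hconnT, hdeT, hduT⟩ := hT
  -- receivers/emitters of S versus T
  have hrecSub : ∀ v ∈ recs E S, v ∈ recs E T := by
    rintro v ⟨hvS, u, huS, he⟩
    refine ⟨hST hvS, u, ?_, he⟩
    intro huT
    exact huS ((hinv u v huT (hST hvS) he).mpr hvS)
  have hemiSub : ∀ v ∈ emis E S, v ∈ emis E T := by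
    rintro v ⟨hvS, u, huS, he⟩
    refine ⟨hST hvS, u, ?_, he⟩
    intro huT
    exact huS ((hinv v u (hST hvS) huT he).mp hvS)
  have hrecSup : ∀ v, v ∈ recs E T → v ∈ S → v ∈ recs E S := by
    rintro v ⟨_, u, huT, he⟩ hvS
    exact ⟨hvS, u, fun h => huT (hST h), he⟩
  have hemiSup : ∀ v, v ∈ emis E T → v ∈ S → v ∈ emis E S := by
    rintro v ⟨_, u, huT, he⟩ hvS
    exact ⟨hvS, u, fun h => huT (hST h), he⟩
  -- external parents/children coincide
  have hps : ∀ r ∈ recs E S, {u | u ∉ S ∧ E u r} = {u | u ∉ T ∧ E u r} := by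
    rintro r ⟨hrS, _⟩
    ext u
    constructor
    · rintro ⟨huS, he⟩
      refine ⟨fun huT => huS ((hinv u r huT (hST hrS) he).mpr hrS), he⟩
    · rintro ⟨huT, he⟩
      exact ⟨fun h => huT (hST h), he⟩
  have hcs : ∀ e ∈ emis E S, {u | u ∉ S ∧ E e u} = {u | u ∉ T ∧ E e u} := by
    rintro e ⟨heS, _⟩
    ext u
    constructor
    · rintro ⟨huS, he⟩
      refine ⟨fun huT => huS ((hinv e u (hST heS) huT he).mp heS), he⟩
    · rintro ⟨huT, he⟩
      exact ⟨fun h => huT (hST h), he⟩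
  obtain ⟨x₀, hx₀V, hx₀S⟩ := hproper
  refine ⟨hSne, ⟨hST.trans hTV.subset, fun h => hx₀S (h hx₀V)⟩, ?_, ?_, ?_, ?_, ?_⟩
  · intro r₁ hr₁ r₂ hr₂
    rw [hps r₁ hr₁, hps r₂ hr₂]
    exact hrecT r₁ (hrecSub r₁ hr₁) r₂ (hrecSub r₂ hr₂)
  · intro e₁ he₁ e₂ he₂
    rw [hcs e₁ he₁, hcs e₂ he₂]
    exact hemiT e₁ (hemiSub e₁ he₁) e₂ (hemiSub e₂ he₂)
  · -- connectivity in the cut graph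
    intro x hx
    obtain ⟨w, hw, hpath⟩ := hconnT x (hST hx)
    have key : ∀ y, UndirReach (CutEdge E T) x y →
        y ∈ S ∧ UndirReach (CutEdge E S) x y := by
      intro y hy
      induction hy with
      | refl => exact ⟨hx, Relation.ReflTransGen.refl⟩
      | tail _ hstep ih =>
        obtain ⟨hyS, hp⟩ := ih
        rcases hstep with ⟨h1, h2, h3, h4, h5⟩ | ⟨h1, h2, h3, h4, h5⟩
        · have hzS := (hinv _ _ h1 h2 h3).mp hyS
          refine ⟨hzS, hp.tail (Or.inl ⟨hyS, hzS, h3,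
            fun h => h4 (hrecSub _ h), fun h => h5 (hemiSub _ h)⟩)⟩
        · have hzS := (hinv _ _ h1 h2 h3).mpr hyS
          refine ⟨hzS, hp.tail (Or.inr ⟨hzS, hyS, h3,
            fun h => h4 (hrecSub _ h), fun h => h5 (hemiSub _ h)⟩)⟩
    obtain ⟨hwS, hp⟩ := key w hpath
    refine ⟨w, ?_, hp⟩
    rcases hw with hw | hw
    · exact Or.inl (hrecSup w hw hwS)
    · exact Or.inr (hemiSup w hw hwS)
  · -- every receiver has an emitter descendant
    rintro ⟨e₀, he₀⟩ r hr
    obtain ⟨e, heT, hpath⟩ := hdeT ⟨e₀, hemiSub e₀ he₀⟩ r (hrecSub r hr)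
    have claimA : ∀ a b, Relation.ReflTransGen E a b → b ∈ emis E T → a ∈ S →
        ∃ e' ∈ emis E S, Relation.ReflTransGen E a e' := by
      intro a b hab hb
      induction hab using Relation.ReflTransGen.head_induction_on with
      | refl => exact fun ha => ⟨b, hemiSup b hb ha, Relation.ReflTransGen.refl⟩
      | head h _ ih =>
        rename_i a' c _
        intro ha
        by_cases hc : c ∈ T
        · obtain ⟨e', he', hp⟩ := ih ((hinv _ _ (hST ha) hc h).mp ha)
          exact ⟨e', he', Relation.ReflTransGen.head h hp⟩
        · exact ⟨a', ⟨ha, c, fun hcS => hc (hST hcS), h⟩, Relation.ReflTransGen.refl⟩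
    exact claimA r e hpath heT hr.1
  · -- every emitter has a receiver ancestor
    rintro ⟨r₀, hr₀⟩ e he
    obtain ⟨r, hrT, hpath⟩ := hduT ⟨r₀, hrecSub r₀ hr₀⟩ e (hemiSub e he)
    have claimB : ∀ b, Relation.ReflTransGen E r b → b ∈ S →
        ∃ r' ∈ recs E S, Relation.ReflTransGen E r' b := by
      intro b hb
      induction hb with
      | refl => exact fun h => ⟨r, hrecSup r hrT h, Relation.ReflTransGen.refl⟩
      | tail hab h ih =>
        rename_i m c
        intro hcS
        by_cases hm : m ∈ T
        · obtain ⟨r', hr', hp⟩ := ih ((hinv _ _ hm (hST hcS) h).mpr hcS)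
          exact ⟨r', hr', hp.tail h⟩
        · exact ⟨c, ⟨hcS, m, fun hmS => hm (hST hmS), h⟩, Relation.ReflTransGen.refl⟩
    exact claimB e hpath he.1

/-- splitting off a separated connected part of a transit cluster. -/
theorem transit_cluster_split
    (V : Set α) (E : α → α → Prop) (T R : Set α)
    (hdag : IsDAG V E)
    (hT : IsTransitCluster V E T)
    (hRT : R ⊆ T)
    (hRne : R.Nonempty)
    (hTRne : (T \ R).Nonempty)
    (hconnR : ∀ u ∈ R, ∀ v ∈ R, UndirReach (fun a b => a ∈ R ∧ b ∈ R ∧ E a b) u v)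
    (hsep : ∀ u ∈ R, ∀ v ∈ T \ R,
      ¬ UndirReach (fun a b => a ∈ T ∧ b ∈ T ∧ E a b) u v) :
    IsTransitCluster V E R ∧ IsTransitCluster V E (T \ R) := by
  have hinvR : ∀ u v, u ∈ T → v ∈ T → E u v → (u ∈ R ↔ v ∈ R) := by
    intro u v hu hv he
    constructor
    · intro huR
      by_contra hvR
      exact hsep u huR v ⟨hv, hvR⟩
        (Relation.ReflTransGen.single (Or.inl ⟨hu, hv, he⟩))
    · intro hvR
      by_contra huR
      exact hsep v hvR u ⟨hu, huR⟩
        (Relation.ReflTransGen.single (Or.inr ⟨hu, hv, he⟩))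
  obtain ⟨x, hxTR⟩ := hTRne
  obtain ⟨y, hyR⟩ := hRne
  constructor
  · exact aux_split V E T R hT hRT ⟨y, hyR⟩
      ⟨x, hT.2.1.subset hxTR.1, hxTR.2⟩ hinvR
  · refine aux_split V E T (T \ R) hT Set.diff_subset ⟨x, hxTR⟩
      ⟨y, hT.2.1.subset (hRT hyR), fun h => h.2 hyR⟩ ?_
    intro u v hu hv he
    have := hinvR u v hu hv he
    simp only [Set.mem_diff, hu, hv, true_and]
    tauto
end

section
/- Let G be the DAG with vertices {x, y, r_1, e_1, …, r_k, e_k} and edges x → r_i, r_i → e_i, e_i → y for each i = 1,…,k. Then for every nonempty subset I ⊆ {1,…,k}, the set ⋃_{i∈I} {r_i, e_i} is a transit cluster of G; in particular G has at least 2^k − 1 non-singleton transit clusters. -/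
variable {α : Type*}

/-- The graph with vertices `x = .inl false`, `y = .inl true`,
`r i = .inr (i, false)`, `e i = .inr (i, true)` and edges
`x → r i`, `r i → e i`, `e i → y`. -/
def GadgetEdge (k : ℕ) : (Bool ⊕ Fin k × Bool) → (Bool ⊕ Fin k × Bool) → Prop :=
  fun u v =>
    (∃ i : Fin k, u = Sum.inl false ∧ v = Sum.inr (i, false)) ∨
    (∃ i : Fin k, u = Sum.inr (i, false) ∧ v = Sum.inr (i, true)) ∨
    (∃ i : Fin k, u = Sum.inr (i, true) ∧ v = Sum.inl true)

section Gadget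

variable {k : ℕ}

/-- The cluster corresponding to `I`. -/
def TI (I : Set (Fin k)) : Set (Bool ⊕ Fin k × Bool) :=
  {v | ∃ i ∈ I, v = Sum.inr (i, false) ∨ v = Sum.inr (i, true)}

lemma inl_not_mem_TI (I : Set (Fin k)) (b : Bool) : Sum.inl b ∉ TI I := by
  rintro ⟨i, hi, h | h⟩ <;> simp at h

lemma inr_mem_TI (I : Set (Fin k)) (i : Fin k) (b : Bool) :
    Sum.inr (i, b) ∈ TI I ↔ i ∈ I := by
  constructor
  · rintro ⟨j, hj, h | h⟩ <;>
      (simp only [Sum.inr.injEq, Prod.mk.injEq] at h; rcases h with ⟨rfl, rfl⟩; exact hj)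
  · intro hi; exact ⟨i, hi, by cases b <;> simp⟩

lemma parent_r (i : Fin k) (u : Bool ⊕ Fin k × Bool) :
    GadgetEdge k u (Sum.inr (i, false)) ↔ u = Sum.inl false := by
  simp [GadgetEdge]

lemma parent_e (i : Fin k) (u : Bool ⊕ Fin k × Bool) :
    GadgetEdge k u (Sum.inr (i, true)) ↔ u = Sum.inr (i, false) := by
  simp only [GadgetEdge]
  constructor
  · rintro (⟨j, rfl, h⟩ | ⟨j, rfl, h⟩ | ⟨j, rfl, h⟩) <;> simp_all
  · rintro rfl; exact Or.inr (Or.inl ⟨i, rfl, rfl⟩)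

lemma child_r (i : Fin k) (u : Bool ⊕ Fin k × Bool) :
    GadgetEdge k (Sum.inr (i, false)) u ↔ u = Sum.inr (i, true) := by
  simp only [GadgetEdge]
  constructor
  · rintro (⟨j, h, rfl⟩ | ⟨j, h, rfl⟩ | ⟨j, h, rfl⟩) <;> simp_all
  · rintro rfl; exact Or.inr (Or.inl ⟨i, rfl, rfl⟩)

lemma child_e (i : Fin k) (u : Bool ⊕ Fin k × Bool) :
    GadgetEdge k (Sum.inr (i, true)) u ↔ u = Sum.inl true := by
  simp [GadgetEdge]

lemma r_mem_recs {I : Set (Fin k)} {i : Fin k} (hi : i ∈ I) :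
    Sum.inr (i, false) ∈ recs (GadgetEdge k) (TI I) :=
  ⟨(inr_mem_TI I i false).mpr hi, Sum.inl false, inl_not_mem_TI I false,
    (parent_r i _).mpr rfl⟩

lemma e_mem_emis {I : Set (Fin k)} {i : Fin k} (hi : i ∈ I) :
    Sum.inr (i, true) ∈ emis (GadgetEdge k) (TI I) :=
  ⟨(inr_mem_TI I i true).mpr hi, Sum.inl true, inl_not_mem_TI I true,
    (child_e i _).mpr rfl⟩

lemma recs_char {I : Set (Fin k)} {r : Bool ⊕ Fin k × Bool}
    (hr : r ∈ recs (GadgetEdge k) (TI I)) : ∃ i ∈ I, r = Sum.inr (i, false) := by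
  obtain ⟨hrT, u, huT, hE⟩ := hr
  obtain ⟨i, hi, rfl | rfl⟩ := hrT
  · exact ⟨i, hi, rfl⟩
  · rw [parent_e] at hE
    subst hE
    exact absurd ((inr_mem_TI I i false).mpr hi) huT

lemma emis_char {I : Set (Fin k)} {e : Bool ⊕ Fin k × Bool}
    (he : e ∈ emis (GadgetEdge k) (TI I)) : ∃ i ∈ I, e = Sum.inr (i, true) := by
  obtain ⟨heT, u, huT, hE⟩ := he
  obtain ⟨i, hi, rfl | rfl⟩ := heT
  · rw [child_r] at hE
    subst hE
    exact absurd ((inr_mem_TI I i true).mpr hi) huT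
  · exact ⟨i, hi, rfl⟩

lemma TI_transit {I : Set (Fin k)} (hI : I.Nonempty) :
    IsTransitCluster Set.univ (GadgetEdge k) (TI I) := by
  obtain ⟨i₀, hi₀⟩ := hI
  refine ⟨⟨Sum.inr (i₀, false), (inr_mem_TI I i₀ false).mpr hi₀⟩,
    ⟨Set.subset_univ _, fun h => inl_not_mem_TI I false (h (Set.mem_univ _))⟩,
    ?_, ?_, ?_, ?_, ?_⟩
  · intro r₁ h₁ r₂ h₂
    obtain ⟨i, _, rfl⟩ := recs_char h₁
    obtain ⟨j, _, rfl⟩ := recs_char h₂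
    ext u
    simp [parent_r]
  · intro e₁ h₁ e₂ h₂
    obtain ⟨i, _, rfl⟩ := emis_char h₁
    obtain ⟨j, _, rfl⟩ := emis_char h₂
    ext u
    simp [child_e]
  · rintro x ⟨i, hi, rfl | rfl⟩
    · exact ⟨_, Or.inl (r_mem_recs hi), Relation.ReflTransGen.refl⟩
    · exact ⟨_, Or.inr (e_mem_emis hi), Relation.ReflTransGen.refl⟩
  · intro _ r hr
    obtain ⟨i, hi, rfl⟩ := recs_char hr
    exact ⟨Sum.inr (i, true), e_mem_emis hi,
      Relation.ReflTransGen.single ((child_r i _).mpr rfl)⟩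
  · intro _ e he
    obtain ⟨i, hi, rfl⟩ := emis_char he
    exact ⟨Sum.inr (i, false), r_mem_recs hi,
      Relation.ReflTransGen.single ((child_r i _).mpr rfl)⟩

end Gadget

/-- every nonempty union of the pairs `{r i, e i}` is a transit
cluster, hence there are at least `2^k - 1` non-singleton transit clusters. -/
theorem gadget_transit_clusters (k : ℕ) :
    (∀ I : Set (Fin k), I.Nonempty →
      IsTransitCluster Set.univ (GadgetEdge k)
        {v | ∃ i ∈ I, v = Sum.inr (i, false) ∨ v = Sum.inr (i, true)}) ∧
    2 ^ k - 1 ≤ Set.ncard {T : Set (Bool ⊕ Fin k × Bool) |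
      IsTransitCluster Set.univ (GadgetEdge k) T ∧ ¬ ∃ v, T = {v}} := by

  refine ⟨fun I hI => TI_transit hI, ?_⟩
  have hinj : Set.InjOn (TI (k := k)) {I : Set (Fin k) | I.Nonempty} := by
    intro I _ J _ hIJ
    ext i
    rw [← inr_mem_TI I i false, hIJ, inr_mem_TI]
  have hsub : TI '' {I : Set (Fin k) | I.Nonempty} ⊆
      {T : Set (Bool ⊕ Fin k × Bool) |
        IsTransitCluster Set.univ (GadgetEdge k) T ∧ ¬ ∃ v, T = {v}} := by
    rintro _ ⟨I, hI, rfl⟩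
    refine ⟨TI_transit hI, ?_⟩
    rintro ⟨v, hv⟩
    obtain ⟨i, hi⟩ := hI
    have h1 : Sum.inr (i, false) ∈ TI I := (inr_mem_TI I i false).mpr hi
    have h2 : Sum.inr (i, true) ∈ TI I := (inr_mem_TI I i true).mpr hi
    rw [hv, Set.mem_singleton_iff] at h1 h2
    rw [← h1] at h2
    simp at h2
  have h1 : Set.ncard {I : Set (Fin k) | I.Nonempty} = 2 ^ k - 1 := by
    have : {I : Set (Fin k) | I.Nonempty} = ({∅} : Set (Set (Fin k)))ᶜ := by
      ext I
      simp [Set.nonempty_iff_ne_empty]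
    rw [this]
    have := Set.ncard_add_ncard_compl ({∅} : Set (Set (Fin k)))
    rw [Set.ncard_singleton] at this
    have hcard : Nat.card (Set (Fin k)) = 2 ^ k := by
      simp [Nat.card_eq_fintype_card]
    omega
  calc 2 ^ k - 1 = Set.ncard (TI '' {I : Set (Fin k) | I.Nonempty}) := by
        rw [Set.ncard_image_of_injOn hinj, h1]
    _ ≤ _ := Set.ncard_le_ncard hsub (Set.toFinite _)
end

section
/- Let T be a transit cluster in a DAG G and let T⁺, G⁺ be obtained by the peripheral extension operation that adds an edge t_i → t_j between two vertices of T without creating a cycle. Then T⁺ = T is a transit cluster in G⁺, and the graph induced by clustering T⁺ in G⁺ equals the graph induced by clustering T in G. -/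
variable {α : Type*}

/-- The edge relation obtained by adding the edge `ti → tj`. -/
def AddEdge (E : α → α → Prop) (ti tj : α) : α → α → Prop :=
  fun u v => E u v ∨ (u = ti ∧ v = tj)

def AgreeOutside (T : Set α) (E E' : α → α → Prop) : Prop :=
  ∀ u v, u ∉ T ∨ v ∉ T → (E u v ↔ E' u v)

section AgreeOutside

variable {V T : Set α} {E E' : α → α → Prop}

lemma recs_eq_of_agreeOutside (h : AgreeOutside T E E') : recs E T = recs E' T :=
  Set.ext fun v => and_congr_right fun _ =>
    exists_congr fun u => and_congr_right fun hu => h u v (Or.inl hu)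

lemma emis_eq_of_agreeOutside (h : AgreeOutside T E E') : emis E T = emis E' T :=
  Set.ext fun v => and_congr_right fun _ =>
    exists_congr fun u => and_congr_right fun hu => h v u (Or.inr hu)

lemma clusterEdge_eq_of_agreeOutside (h : AgreeOutside T E E') (t : α) :
    ClusterEdge E T t = ClusterEdge E' T t := by
  funext u v
  simp only [ClusterEdge, recs_eq_of_agreeOutside h, emis_eq_of_agreeOutside h]
  refine propext (or_congr ?_ (or_congr ?_ ?_))
  · exact and_congr_right fun hu => and_congr_right fun _ => h u v (Or.inl hu)
  · exact and_congr_right fun hu => and_congr_right fun _ => and_congr_right fun _ =>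
      exists_congr fun r => and_congr_right fun _ => h u r (Or.inl hu)
  · exact and_congr_right fun _ => and_congr_right fun hv => and_congr_right fun _ =>
      exists_congr fun e => and_congr_right fun _ => h e v (Or.inr hv)

lemma cutEdge_mono_of_agreeOutside (hle : ∀ u v, E u v → E' u v) (h : AgreeOutside T E E')
    {u v : α} (huv : CutEdge E T u v) : CutEdge E' T u v := by
  obtain ⟨hu, hv, hE, hv_rec, hu_emi⟩ := huv
  rw [recs_eq_of_agreeOutside h] at hv_rec
  rw [emis_eq_of_agreeOutside h] at hu_emi
  exact ⟨hu, hv, hle u v hE, hv_rec, hu_emi⟩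

/-- Enlarging the edge relation only inside `T` keeps `T` a transit cluster: the boundary
conditions see only edges leaving or entering `T`, and the reachability conditions are
monotone in the edges. -/
theorem IsTransitCluster.of_le_of_agreeOutside (hT : IsTransitCluster V E T)
    (hle : ∀ u v, E u v → E' u v) (h : AgreeOutside T E E') : IsTransitCluster V E' T := by
  obtain ⟨hne, hsub, hparents, hchildren, hconn, hrec_emi, hemi_rec⟩ := hT
  have parents_eq (r : α) : {u | u ∉ T ∧ E u r} = {u | u ∉ T ∧ E' u r} :=
    Set.ext fun u => and_congr_right fun hu => h u r (Or.inl hu)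
  have children_eq (e : α) : {u | u ∉ T ∧ E e u} = {u | u ∉ T ∧ E' e u} :=
    Set.ext fun u => and_congr_right fun hu => h e u (Or.inr hu)
  have reach_mono {a b : α} : Relation.ReflTransGen E a b → Relation.ReflTransGen E' a b :=
    Relation.ReflTransGen.mono hle a b
  unfold IsTransitCluster
  rw [← recs_eq_of_agreeOutside h, ← emis_eq_of_agreeOutside h]
  refine ⟨hne, hsub, ?_, ?_, ?_, ?_, ?_⟩
  · intro r₁ h₁ r₂ h₂
    rw [← parents_eq, ← parents_eq, hparents r₁ h₁ r₂ h₂]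
  · intro e₁ h₁ e₂ h₂
    rw [← children_eq, ← children_eq, hchildren e₁ h₁ e₂ h₂]
  · intro x hx
    obtain ⟨w, hw, hreach⟩ := hconn x hx
    refine ⟨w, hw, Relation.ReflTransGen.mono (fun a b => ?_) x w hreach⟩
    exact Or.imp (cutEdge_mono_of_agreeOutside hle h) (cutEdge_mono_of_agreeOutside hle h)
  · intro hemi r hr
    obtain ⟨e, he, hreach⟩ := hrec_emi hemi r hr
    exact ⟨e, he, reach_mono hreach⟩
  · intro hrec e he
    obtain ⟨r, hr, hreach⟩ := hemi_rec hrec e he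
    exact ⟨r, hr, reach_mono hreach⟩

end AgreeOutside

lemma agreeOutside_addEdge (E : α → α → Prop) {T : Set α} {ti tj : α} (hti : ti ∈ T)
    (htj : tj ∈ T) : AgreeOutside T E (AddEdge E ti tj) := by
  rintro u v huv
  refine ⟨Or.inl, Or.rec id ?_⟩
  rintro ⟨rfl, rfl⟩
  exact huv.elim (absurd hti) (absurd htj)

theorem peripheral_add_edge_general
    (V : Set α) (E : α → α → Prop) (T : Set α) (ti tj t : α)
    (hT : IsTransitCluster V E T)
    (hti : ti ∈ T) (htj : tj ∈ T) :
    IsTransitCluster V (AddEdge E ti tj) T ∧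
    ClusterVerts V T t = ClusterVerts V T t ∧
    ClusterEdge (AddEdge E ti tj) T t = ClusterEdge E T t := by
  have hagree := agreeOutside_addEdge E hti htj
  exact ⟨hT.of_le_of_agreeOutside (fun _ _ => Or.inl) hagree, rfl,
    (clusterEdge_eq_of_agreeOutside hagree t).symm⟩

/-- peripheral extension, operation 1 (adding an internal edge). -/
theorem peripheral_add_edge
    (V : Set α) (E : α → α → Prop) (T : Set α) (ti tj t : α)
    (hdag : IsDAG V E)
    (hT : IsTransitCluster V E T)
    (hti : ti ∈ T) (htj : tj ∈ T)
    (hacy : Acyclic (AddEdge E ti tj))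
    (ht : t ∉ V) :
    IsTransitCluster V (AddEdge E ti tj) T ∧
    ClusterVerts V T t = ClusterVerts V T t ∧
    ClusterEdge (AddEdge E ti tj) T t = ClusterEdge E T t :=
  peripheral_add_edge_general V E T ti tj t hT hti htj
end

section
/- Let T be a transit cluster in a DAG G = (V,E) and let G' be the graph induced by clustering T into a single vertex t. For disjoint sets V_1, V_2, V_3 ⊆ V with either T ⊆ V_i or T ∩ V_i = ∅ for each i ∈ {1,2,3}, let V_1', V_2', V_3' be the clustering-equivalent sets in G' (replacing T by {t} where applicable). If V_1' and V_2' are d-separated given V_3' in G', then V_1 and V_2 are d-separated given V_3 in G. -/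
variable {α : Type*}

/-- `b` is an active interior vertex of a path segment `a - b - c` given `C`:
if `b` is a collider on the segment it has a descendant in `C`; otherwise it is
not in `C`. -/
def ActiveTriple (E : α → α → Prop) (C : Set α) (a b c : α) : Prop :=
  (E a b ∧ E c b ∧ ∃ d ∈ C, Relation.ReflTransGen E b d) ∨
  (¬(E a b ∧ E c b) ∧ b ∉ C)

/-- Every interior vertex of the list is active given `C`. -/
def ActiveTriples (E : α → α → Prop) (C : Set α) : List α → Prop
  | a :: b :: c :: rest => ActiveTriple E C a b c ∧ ActiveTriples E C (b :: c :: rest)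
  | _ => True

/-- There is a d-connecting (active) path from `u` to `v` given `C`. -/
def ActivePath (E : α → α → Prop) (C : Set α) (u v : α) : Prop :=
  ∃ p : List α, p.Nodup ∧ p.head? = some u ∧ p.getLast? = some v ∧
    p.Chain' (fun a b => E a b ∨ E b a) ∧ ActiveTriples E C p

/-- `A` and `B` are d-separated given `C`: every path between them is blocked. -/
def DSep (E : α → α → Prop) (A B C : Set α) : Prop :=
  ∀ u ∈ A, ∀ v ∈ B, ¬ ActivePath E C u v

/-!
Given an active path of `G` between `V₁` and `V₂`, replace the segment between its first and
last vertex in `T` by `t`. The result is a path of `G'` between the clustering-equivalent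
endpoints, and it is active given `V₃'`. Vertices outside `T` keep their status: an edge between
such a vertex and `t` has the orientation of the corresponding edge into or out of the segment,
because by the transit-cluster axioms no vertex is both a parent and a child of `t`. The vertex
`t` is active as well: if both path edges at the segment point into it, the segment contains a
collider, whose descendant in `V₃` is a descendant of `t`; otherwise the first or the last
vertex of the segment is a non-collider of the original path, so it lies outside `V₃`, hence
`T` is disjoint from `V₃` and `t ∉ V₃'`.
-/

open Relation List

theorem Acyclic.asymm {E : α → α → Prop} (hacy : Acyclic E) {a b : α} (h : E a b) : ¬E b a :=
  fun h' => hacy a (TransGen.head h (TransGen.single h'))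

theorem exists_eq_append_cons_of_exists_mem {T : Set α} : ∀ {l : List α}, (∃ x ∈ l, x ∈ T) →
    ∃ A m l', l = A ++ m :: l' ∧ m ∈ T ∧ ∀ x ∈ A, x ∉ T
  | [], h => by simp at h
  | x :: l, h => by
    by_cases hx : x ∈ T
    · exact ⟨[], x, l, rfl, hx, by simp⟩
    · obtain ⟨A, m, l', rfl, hm, hA⟩ :=
        exists_eq_append_cons_of_exists_mem (l := l) (by simpa [hx] using h)
      exact ⟨x :: A, m, l', rfl, hm, forall_mem_cons.mpr ⟨hx, hA⟩⟩

theorem exists_eq_append_append_of_exists_mem {T : Set α} {l : List α} (h : ∃ x ∈ l, x ∈ T) :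
    ∃ A S B m₁ m₂, l = A ++ S ++ B ∧ S.head? = some m₁ ∧ S.getLast? = some m₂ ∧ m₁ ∈ T ∧
      m₂ ∈ T ∧ (∀ x ∈ A, x ∉ T) ∧ ∀ x ∈ B, x ∉ T := by
  obtain ⟨A, m₁, l, rfl, hm₁, hA⟩ := exists_eq_append_cons_of_exists_mem h
  obtain ⟨B, m₂, S, hrev, hm₂, hB⟩ :=
    exists_eq_append_cons_of_exists_mem (l := (m₁ :: l).reverse) ⟨m₁, by simp, hm₁⟩
  have hl : m₁ :: l = (S.reverse ++ [m₂]) ++ B.reverse := by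
    rw [← reverse_reverse (m₁ :: l), hrev]; simp
  refine ⟨A, S.reverse ++ [m₂], B.reverse, m₁, m₂, by rw [append_assoc, ← hl], ?_, by simp,
    hm₁, hm₂, hA, by simpa using hB⟩
  simpa using (congrArg head? hl).symm

section Walks

variable {E : α → α → Prop} {C : Set α}

def ActiveWalk (E : α → α → Prop) (C : Set α) (p : List α) : Prop :=
  p.IsChain (fun a b => E a b ∨ E b a) ∧ ActiveTriples E C p

theorem activeTriple_comm {a b c : α} : ActiveTriple E C a b c ↔ ActiveTriple E C c b a := by
  unfold ActiveTriple
  rw [and_left_comm (a := E a b), and_comm (a := E a b) (b := E c b)]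

theorem ActiveTriple.notMem_of_not_rel {a b c : α} (h : ActiveTriple E C a b c) (hab : ¬E a b) :
    b ∉ C := by
  rcases h with ⟨h, -⟩ | ⟨-, hb⟩
  exacts [absurd h hab, hb]

theorem activeTriples_cons_cons_cons {a b c : α} {l : List α} :
    ActiveTriples E C (a :: b :: c :: l) ↔
      ActiveTriple E C a b c ∧ ActiveTriples E C (b :: c :: l) :=
  Iff.rfl

theorem ActiveTriples.imp_of_mem {E' : α → α → Prop} {C' : Set α} : ∀ {l : List α},
    (∀ a ∈ l, ∀ b ∈ l, ∀ c ∈ l, ActiveTriple E C a b c → ActiveTriple E' C' a b c) →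
      ActiveTriples E C l → ActiveTriples E' C' l
  | [], _, _ | [_], _, _ | [_, _], _, _ => trivial
  | a :: b :: c :: l, himp, ⟨habc, h⟩ =>
    ⟨himp a (by simp) b (by simp) c (by simp) habc,
      ActiveTriples.imp_of_mem (fun x hx y hy z hz h =>
        himp x (mem_cons_of_mem a hx) y (mem_cons_of_mem a hy) z (mem_cons_of_mem a hz) h) h⟩

theorem ActiveWalk.imp_of_mem {E' : α → α → Prop} {C' : Set α} {l : List α}
    (hedge : ∀ a ∈ l, ∀ b ∈ l, E' a b ↔ E a b)
    (htriple : ∀ a ∈ l, ∀ b ∈ l, ∀ c ∈ l, ActiveTriple E C a b c → ActiveTriple E' C' a b c)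
    (h : ActiveWalk E C l) : ActiveWalk E' C' l :=
  ⟨h.1.imp_of_mem_imp fun a b ha hb => Or.imp (hedge a ha b hb).2 (hedge b hb a ha).2,
    h.2.imp_of_mem htriple⟩

theorem activeTriples_append_cons_iff {x : α} : ∀ {l₁ l₂ : List α},
    ActiveTriples E C (l₁ ++ x :: l₂) ↔ ActiveTriples E C (l₁ ++ [x]) ∧
      ActiveTriples E C (x :: l₂) ∧ ∀ a ∈ l₁.getLast?, ∀ c ∈ l₂.head?, ActiveTriple E C a x c
  | [], _ => by simp [ActiveTriples]
  | [_], [] => by simp [ActiveTriples]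
  | [_], _ :: _ => by simp [ActiveTriples, and_comm]
  | a :: b :: l₁, l₂ => by
      obtain ⟨c, l, hc⟩ : ∃ c l, l₁ ++ [x] = c :: l := List.exists_cons_of_ne_nil (by simp)
      have hc' : l₁ ++ x :: l₂ = c :: (l ++ l₂) := by
        rw [← cons_append, ← hc, append_assoc, singleton_append]
      have ih := activeTriples_append_cons_iff (x := x) (l₁ := b :: l₁) (l₂ := l₂)
      simp only [cons_append, hc, hc'] at ih ⊢
      rw [activeTriples_cons_cons_cons, activeTriples_cons_cons_cons, ih, getLast?_cons_cons]
      tauto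

theorem activeWalk_append_cons_iff {x : α} {l₁ l₂ : List α} :
    ActiveWalk E C (l₁ ++ x :: l₂) ↔ ActiveWalk E C (l₁ ++ [x]) ∧
      ActiveWalk E C (x :: l₂) ∧ ∀ a ∈ l₁.getLast?, ∀ c ∈ l₂.head?, ActiveTriple E C a x c := by
  rw [ActiveWalk, ActiveWalk, ActiveWalk, isChain_split, activeTriples_append_cons_iff]
  tauto

theorem activeTriples_reverse : ∀ {l : List α}, ActiveTriples E C l.reverse ↔ ActiveTriples E C l
  | [] | [_] => Iff.rfl
  | x :: y :: l => by
      have hrev : (x :: y :: l).reverse = l.reverse ++ y :: [x] := by simp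
      rw [hrev, activeTriples_append_cons_iff, ← reverse_cons, activeTriples_reverse,
        show x :: y :: l = [x] ++ y :: l from rfl, activeTriples_append_cons_iff]
      simp [ActiveTriples, activeTriple_comm (a := x)]

theorem activeWalk_reverse {l : List α} : ActiveWalk E C l.reverse ↔ ActiveWalk E C l := by
  simp only [ActiveWalk, isChain_reverse, activeTriples_reverse, or_comm]

/-- Walking from `m` along forward edges, the first backward edge of the walk exhibits a
collider, whose descendant in `C` is then a descendant of `m`. -/
theorem ActiveWalk.exists_mem_reflTransGen_of_inward : ∀ {M : List α} {a m m' c : α},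
    ActiveWalk E C (a :: m :: (M ++ [c])) → E a m → (m :: M).getLast? = some m' → E c m' →
      ∃ d ∈ C, ReflTransGen E m d
  | [], a, m, m', c, h, ham, hm', hcm' => by
      obtain rfl : m = m' := by simpa using hm'
      rcases h.2.1 with ⟨-, -, hd⟩ | ⟨hn, -⟩
      exacts [hd, absurd ⟨ham, hcm'⟩ hn]
  | y :: M, a, m, m', c, h, ham, hm', hcm' => by
      rcases h.1.tail.rel_head? rfl with hmy | hym
      · obtain ⟨d, hd, hyd⟩ := ActiveWalk.exists_mem_reflTransGen_of_inward
          (a := m) ⟨h.1.tail, h.2.2⟩ hmy (by rwa [getLast?_cons_cons] at hm') hcm'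
        exact ⟨d, hd, hyd.head hmy⟩
      · rcases h.2.1 with ⟨-, -, hd⟩ | ⟨hn, -⟩
        exacts [hd, absurd ⟨ham, hym⟩ hn]

end Walks

section Clustering

variable {V T : Set α} {E : α → α → Prop} {t : α}

open Classical in
noncomputable def clusterMap (T : Set α) (t x : α) : α := if x ∈ T then t else x

theorem clusterMap_of_mem {x : α} (hx : x ∈ T) : clusterMap T t x = t := if_pos hx

theorem clusterMap_of_notMem {x : α} (hx : x ∉ T) : clusterMap T t x = x := if_neg hx

def IsClusterEquiv (T : Set α) (t : α) (W W' : Set α) : Prop :=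
  (T ⊆ W ∨ T ∩ W = ∅) ∧ W' \ {t} = W \ T ∧ (T ⊆ W ↔ t ∈ W')

theorem IsClusterEquiv.clusterMap_mem {W W' : Set α} (h : IsClusterEquiv T t W W') {x : α}
    (hx : x ∈ W) : clusterMap T t x ∈ W' := by
  by_cases hxT : x ∈ T
  · rw [clusterMap_of_mem hxT]
    exact h.2.2.mp (h.1.resolve_right fun hTW => Set.eq_empty_iff_forall_notMem.mp hTW x ⟨hxT, hx⟩)
  · have hx' : x ∈ W \ T := ⟨hx, hxT⟩
    rw [← h.2.1] at hx'
    rw [clusterMap_of_notMem hxT]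
    exact hx'.1

theorem IsClusterEquiv.mem_of_clusterMap_mem {W W' : Set α} (h : IsClusterEquiv T t W W') {x : α}
    (hxt : x ≠ t) (hx : clusterMap T t x ∈ W') : x ∈ W := by
  by_cases hxT : x ∈ T
  · rw [clusterMap_of_mem hxT] at hx
    exact h.2.2.mpr hx hxT
  · rw [clusterMap_of_notMem hxT] at hx
    have hx' : x ∈ W' \ {t} := ⟨hx, hxt⟩
    rw [h.2.1] at hx'
    exact hx'.1

theorem clusterEdge_iff_of_notMem {x y : α} (hx : x ∉ T) (hy : y ∉ T) (hxt : x ≠ t) (hyt : y ≠ t) :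
    ClusterEdge E T t x y ↔ E x y := by
  refine ⟨?_, fun h => Or.inl ⟨hx, hy, h⟩⟩
  rintro (⟨-, -, h⟩ | ⟨-, -, rfl, -⟩ | ⟨rfl, -⟩)
  exacts [h, absurd rfl hyt, absurd rfl hxt]

theorem clusterEdge_to_cluster (hE : EdgesIn V E) (ht : t ∉ V) {x y : α} (hxy : E x y)
    (hx : x ∉ T) (hy : y ∈ T) : ClusterEdge E T t x t :=
  Or.inr (Or.inl ⟨hx, (hE x y hxy).1.ne_of_notMem ht, rfl, y, ⟨hy, x, hx, hxy⟩, hxy⟩)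

theorem clusterEdge_from_cluster (hE : EdgesIn V E) (ht : t ∉ V) {x y : α} (hxy : E x y)
    (hx : x ∈ T) (hy : y ∉ T) : ClusterEdge E T t t y :=
  Or.inr (Or.inr ⟨rfl, hy, (hE x y hxy).2.ne_of_notMem ht, x, ⟨hx, y, hy, hxy⟩, hxy⟩)

theorem clusterEdge_clusterMap (hE : EdgesIn V E) (ht : t ∉ V) {x y : α} (hxy : E x y)
    (hT : x ∉ T ∨ y ∉ T) : ClusterEdge E T t (clusterMap T t x) (clusterMap T t y) := by
  by_cases hx : x ∈ T <;> by_cases hy : y ∈ T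
  · exact absurd hT (by tauto)
  · rw [clusterMap_of_mem hx, clusterMap_of_notMem hy]
    exact clusterEdge_from_cluster hE ht hxy hx hy
  · rw [clusterMap_of_notMem hx, clusterMap_of_mem hy]
    exact clusterEdge_to_cluster hE ht hxy hx hy
  · rw [clusterMap_of_notMem hx, clusterMap_of_notMem hy]
    exact Or.inl ⟨hx, hy, hxy⟩

theorem reflTransGen_clusterMap (hE : EdgesIn V E) (ht : t ∉ V) {x y : α}
    (h : ReflTransGen E x y) :
    ReflTransGen (ClusterEdge E T t) (clusterMap T t x) (clusterMap T t y) := by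
  refine ReflTransGen.lift' _ (fun a b hab => ?_) _ _ h
  by_cases hT : a ∈ T ∧ b ∈ T
  · simp only [Function.onFun, clusterMap_of_mem hT.1, clusterMap_of_mem hT.2, ReflTransGen.refl]
  · exact .single (clusterEdge_clusterMap hE ht hab (not_and_or.mp hT))

/-- An edge `x → r` into a receiver and an edge `e → x` out of an emitter close a cycle through
an emitter reachable from `r`, since all emitters share their external children. -/
theorem clusterEdge_asymm (hE : EdgesIn V E) (ht : t ∉ V) (hacy : Acyclic E)
    (hT : IsTransitCluster V E T) {x : α} (hxt : ClusterEdge E T t x t) :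
    ¬ClusterEdge E T t t x := by
  obtain ⟨-, -, -, hemis, -, hre, -⟩ := hT
  rcases hxt with ⟨-, -, h⟩ | ⟨hx, -, -, r, hr, hxr⟩ | ⟨-, -, htt, -⟩
  · exact fun _ => ht (hE x t h).2
  · rintro (⟨-, -, h⟩ | ⟨-, htt, -⟩ | ⟨-, -, -, e, he, hex⟩)
    · exact ht (hE t x h).1
    · exact htt rfl
    · obtain ⟨e', he', hre'⟩ := hre ⟨e, he⟩ r hr
      have hx' : x ∈ {u | u ∉ T ∧ E e' u} := by rw [hemis e' he' e he]; exact ⟨hx, hex⟩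
      exact hacy x (TransGen.tail' (hre'.head hxr) hx'.2)
  · exact absurd rfl htt

theorem clusterEdge_clusterMap_iff (hE : EdgesIn V E) (ht : t ∉ V) (hacy : Acyclic E)
    (hT : IsTransitCluster V E T) {a b : α} (hb : b ∉ T) (hab : E a b ∨ E b a) :
    ClusterEdge E T t (clusterMap T t a) b ↔ E a b := by
  have hV : a ∈ V ∧ b ∈ V := hab.elim (hE a b) fun h => (hE b a h).symm
  by_cases ha : a ∈ T
  · rw [clusterMap_of_mem ha]
    refine ⟨fun h => hab.resolve_right fun hba => ?_,
      fun h => clusterEdge_from_cluster hE ht h ha hb⟩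
    exact clusterEdge_asymm hE ht hacy hT (clusterEdge_to_cluster hE ht hba hb ha) h
  · rw [clusterMap_of_notMem ha]
    exact clusterEdge_iff_of_notMem ha hb (hV.1.ne_of_notMem ht) (hV.2.ne_of_notMem ht)

theorem exists_reflTransGen_clusterMap (hE : EdgesIn V E) (ht : t ∉ V) {C C' : Set α}
    (hC : IsClusterEquiv T t C C') {b d : α} (hd : d ∈ C) (hbd : ReflTransGen E b d) :
    ∃ d' ∈ C', ReflTransGen (ClusterEdge E T t) (clusterMap T t b) d' :=
  ⟨_, hC.clusterMap_mem hd, reflTransGen_clusterMap hE ht hbd⟩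

theorem ActiveTriple.clusterEdge (hE : EdgesIn V E) (ht : t ∉ V) {C C' : Set α}
    (hC : IsClusterEquiv T t C C') {a b c a' c' : α} (hb : b ∉ T) (hbt : b ≠ t)
    (hab : ClusterEdge E T t a' b ↔ E a b) (hcb : ClusterEdge E T t c' b ↔ E c b)
    (h : ActiveTriple E C a b c) : ActiveTriple (ClusterEdge E T t) C' a' b c' := by
  rw [ActiveTriple, hab, hcb]
  rcases h with ⟨hab, hcb, d, hd, hbd⟩ | ⟨hn, hbC⟩
  · refine Or.inl ⟨hab, hcb, ?_⟩
    simpa only [clusterMap_of_notMem hb] using exists_reflTransGen_clusterMap hE ht hC hd hbd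
  · refine Or.inr ⟨hn, fun hbC' => hbC (hC.mem_of_clusterMap_mem hbt ?_)⟩
    rwa [clusterMap_of_notMem hb]

theorem ActiveWalk.clusterEdge_of_forall_notMem (hE : EdgesIn V E) (ht : t ∉ V) {C C' : Set α}
    (hC : IsClusterEquiv T t C C') {l : List α} (hV : ∀ x ∈ l, x ∈ V) (hT : ∀ x ∈ l, x ∉ T)
    (h : ActiveWalk E C l) : ActiveWalk (ClusterEdge E T t) C' l := by
  have hne : ∀ x ∈ l, x ≠ t := fun x hx => (hV x hx).ne_of_notMem ht
  have hedge : ∀ a ∈ l, ∀ b ∈ l, ClusterEdge E T t a b ↔ E a b := fun a ha b hb =>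
    clusterEdge_iff_of_notMem (hT a ha) (hT b hb) (hne a ha) (hne b hb)
  exact h.imp_of_mem hedge fun a ha b hb c hc =>
    ActiveTriple.clusterEdge hE ht hC (hT b hb) (hne b hb) (hedge a ha b hb) (hedge c hc b hb)

theorem ActiveWalk.clusterEdge_append_singleton (hE : EdgesIn V E) (ht : t ∉ V) (hacy : Acyclic E)
    (hT : IsTransitCluster V E T) {C C' : Set α} (hC : IsClusterEquiv T t C C')
    {A l : List α} {m : α} (hV : ∀ x ∈ A, x ∈ V) (hA : ∀ x ∈ A, x ∉ T) (hm : m ∈ T)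
    (h : ActiveWalk E C (A ++ m :: l)) : ActiveWalk (ClusterEdge E T t) C' (A ++ [t]) := by
  rcases eq_nil_or_concat A with rfl | ⟨A, a, rfl⟩
  · exact ⟨isChain_singleton t, trivial⟩
  rw [concat_eq_append] at h hV hA ⊢
  have hedge : ∀ x ∈ A ++ [a], ∀ y ∈ A ++ [a], ClusterEdge E T t x y ↔ E x y := fun x hx y hy =>
    clusterEdge_iff_of_notMem (hA x hx) (hA y hy) ((hV x hx).ne_of_notMem ht)
      ((hV y hy).ne_of_notMem ht)
  have ha : a ∈ A ++ [a] := mem_append_right A (mem_singleton_self a)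
  rw [append_assoc, singleton_append] at h ⊢
  obtain ⟨hA', ham, htriple⟩ := activeWalk_append_cons_iff.mp h
  replace ham : E a m ∨ E m a := ham.1.rel_head? rfl
  have hta : ClusterEdge E T t t a ↔ E m a := by
    simpa only [clusterMap_of_mem hm] using
      clusterEdge_clusterMap_iff hE ht hacy hT (hA a ha) ham.symm
  refine activeWalk_append_cons_iff.mpr ⟨?_, ⟨isChain_pair.mpr ?_, trivial⟩, fun x hx c hc => ?_⟩
  · exact hA'.clusterEdge_of_forall_notMem hE ht hC hV hA
  · exact ham.imp (fun h => clusterEdge_to_cluster hE ht h (hA a ha) hm) hta.mpr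
  · obtain rfl : c = t := by simpa using hc.symm
    have hx' : x ∈ A ++ [a] := mem_append_left _ (mem_of_mem_getLast? hx)
    exact (htriple x hx m rfl).clusterEdge hE ht hC (hA a ha) ((hV a ha).ne_of_notMem ht)
      (hedge x hx' a ha) hta

theorem ActiveWalk.activeTriple_cluster_of_rel (hE : EdgesIn V E) (ht : t ∉ V) (hacy : Acyclic E)
    (hT : IsTransitCluster V E T) {C C' : Set α} (hC : IsClusterEquiv T t C C')
    {S : List α} {a c m : α} (ha : a ∉ T) (hm : S.head? = some m) (hmT : m ∈ T) (hma : E m a)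
    (h : ActiveWalk E C (a :: (S ++ [c]))) : ActiveTriple (ClusterEdge E T t) C' a t c := by
  obtain ⟨S, rfl⟩ := head?_eq_some_iff.mp hm
  obtain ⟨y, l, hy⟩ : ∃ y l, S ++ [c] = y :: l := exists_cons_of_ne_nil (by simp)
  have hmC : m ∉ C := by
    rw [cons_append, hy] at h
    exact h.2.1.notMem_of_not_rel (hacy.asymm hma)
  have hta := clusterEdge_from_cluster hE ht hma hmT ha
  refine Or.inr ⟨fun hat => clusterEdge_asymm hE ht hacy hT hat.1 hta, fun htC => hmC ?_⟩
  refine hC.mem_of_clusterMap_mem ((hE m a hma).1.ne_of_notMem ht) ?_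
  rwa [clusterMap_of_mem hmT]

theorem ActiveWalk.activeTriple_cluster (hE : EdgesIn V E) (ht : t ∉ V) (hacy : Acyclic E)
    (hT : IsTransitCluster V E T) {C C' : Set α} (hC : IsClusterEquiv T t C C')
    {S : List α} {a c m₁ m₂ : α} (ha : a ∉ T) (hc : c ∉ T)
    (hm₁ : S.head? = some m₁) (hm₂ : S.getLast? = some m₂) (hm₁T : m₁ ∈ T) (hm₂T : m₂ ∈ T)
    (h : ActiveWalk E C (a :: (S ++ [c]))) : ActiveTriple (ClusterEdge E T t) C' a t c := by
  have hrev : ActiveWalk E C (c :: (S.reverse ++ [a])) := by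
    simpa using activeWalk_reverse.mpr h
  have hm₂' : S.reverse.head? = some m₂ := by rwa [head?_reverse]
  by_cases hm₁a : E m₁ a
  · exact h.activeTriple_cluster_of_rel hE ht hacy hT hC ha hm₁ hm₁T hm₁a
  by_cases hm₂c : E m₂ c
  · exact activeTriple_comm.mp (hrev.activeTriple_cluster_of_rel hE ht hacy hT hC hc hm₂' hm₂T hm₂c)
  have hcm : E c m₂ := (hrev.1.rel_head? (by simp [hm₂'])).resolve_right hm₂c
  obtain ⟨S, rfl⟩ := head?_eq_some_iff.mp hm₁
  have ham : E a m₁ := (h.1.rel_head? rfl).resolve_right hm₁a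
  obtain ⟨d, hd, hm₁d⟩ := h.exists_mem_reflTransGen_of_inward ham hm₂ hcm
  refine Or.inl ⟨clusterEdge_to_cluster hE ht ham ha hm₁T,
    clusterEdge_to_cluster hE ht hcm hc hm₂T, ?_⟩
  simpa only [clusterMap_of_mem hm₁T] using exists_reflTransGen_clusterMap hE ht hC hd hm₁d

theorem head?_append_cons_eq_clusterMap {A S B : List α} {m u : α} (hA : ∀ x ∈ A, x ∉ T)
    (hS : S.head? = some m) (hm : m ∈ T) (hu : (A ++ S ++ B).head? = some u) :
    (A ++ t :: B).head? = some (clusterMap T t u) := by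
  rcases A with _ | ⟨a, A⟩
  · obtain ⟨S, rfl⟩ := head?_eq_some_iff.mp hS
    obtain rfl : m = u := by simpa using hu
    simp [clusterMap_of_mem hm]
  · obtain rfl : a = u := by simpa using hu
    simp [clusterMap_of_notMem (hA a mem_cons_self)]

theorem ActiveWalk.clusterEdge_collapse (hE : EdgesIn V E) (ht : t ∉ V) (hacy : Acyclic E)
    (hT : IsTransitCluster V E T) {C C' : Set α} (hC : IsClusterEquiv T t C C')
    {A S B : List α} {m₁ m₂ : α} (hV : ∀ x ∈ A ++ S ++ B, x ∈ V) (hA : ∀ x ∈ A, x ∉ T)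
    (hB : ∀ x ∈ B, x ∉ T) (hm₁ : S.head? = some m₁) (hm₂ : S.getLast? = some m₂)
    (hm₁T : m₁ ∈ T) (hm₂T : m₂ ∈ T) (h : ActiveWalk E C (A ++ S ++ B)) :
    ActiveWalk (ClusterEdge E T t) C' (A ++ t :: B) := by
  have hleft : ActiveWalk (ClusterEdge E T t) C' (A ++ [t]) := by
    obtain ⟨S, rfl⟩ := head?_eq_some_iff.mp hm₁
    exact ActiveWalk.clusterEdge_append_singleton hE ht hacy hT hC
      (fun x hx => hV x (by simp [hx])) hA hm₁T (by simpa using h)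
  have hright : ActiveWalk (ClusterEdge E T t) C' (t :: B) := by
    obtain ⟨S', hS'⟩ := head?_eq_some_iff.mp (head?_reverse.trans hm₂)
    have hrev : ActiveWalk E C (B.reverse ++ m₂ :: (S' ++ A.reverse)) := by
      rw [← cons_append, ← hS']; simpa using activeWalk_reverse.mpr h
    have hleft' := hrev.clusterEdge_append_singleton hE ht hacy hT hC
      (fun x hx => hV x (by simp [mem_reverse.mp hx])) (by simpa using hB) hm₂T
    simpa using activeWalk_reverse.mpr hleft'
  refine activeWalk_append_cons_iff.mpr ⟨hleft, hright, fun a ha c hc => ?_⟩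
  obtain ⟨A, rfl⟩ := getLast?_eq_some_iff.mp ha
  obtain ⟨B, rfl⟩ := head?_eq_some_iff.mp hc
  have hseg : ActiveWalk E C (a :: S ++ c :: B) := by
    simpa using (activeWalk_append_cons_iff.mp (by simpa using h)).2.1
  exact (activeWalk_append_cons_iff.mp hseg).1.activeTriple_cluster hE ht hacy hT hC
    (hA a (by simp)) (hB c (by simp)) hm₁ hm₂ hm₁T hm₂T

theorem ActivePath.clusterEdge (hE : EdgesIn V E) (ht : t ∉ V) (hacy : Acyclic E)
    (hT : IsTransitCluster V E T) {C C' : Set α} (hC : IsClusterEquiv T t C C') {u v : α}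
    (hu : u ∈ V) (h : ActivePath E C u v) :
    ActivePath (ClusterEdge E T t) C' (clusterMap T t u) (clusterMap T t v) := by
  obtain ⟨p, hnd, hpu, hpv, hch, hact⟩ := h
  have hW : ActiveWalk E C p := ⟨hch, hact⟩
  have hV : ∀ x ∈ p, x ∈ V := hch.induction _ _
    (fun x y hxy _ => hxy.elim (fun h => (hE x y h).2) (fun h => (hE y x h).1))
    (fun hne => by rw [head?_eq_some_head hne, Option.some_inj] at hpu; rwa [hpu])
  by_cases hpT : ∀ x ∈ p, x ∉ T
  · rw [clusterMap_of_notMem (hpT u (mem_of_mem_head? hpu)),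
      clusterMap_of_notMem (hpT v (mem_of_mem_getLast? hpv))]
    exact ⟨p, hnd, hpu, hpv, hW.clusterEdge_of_forall_notMem hE ht hC hV hpT⟩
  · obtain ⟨A, S, B, m₁, m₂, rfl, hm₁, hm₂, hm₁T, hm₂T, hA, hB⟩ :=
      exists_eq_append_append_of_exists_mem (by simpa using hpT)
    have htAB : t ∉ A ++ B := fun htAB => ht (hV t (by simp at htAB ⊢; tauto))
    refine ⟨A ++ t :: B, ?_, head?_append_cons_eq_clusterMap hA hm₁ hm₁T hpu, ?_,
      hW.clusterEdge_collapse hE ht hacy hT hC hV hA hB hm₁ hm₂ hm₁T hm₂T⟩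
    · refine nodup_middle.mpr (nodup_cons.mpr ⟨htAB, hnd.sublist ?_⟩)
      simpa only [append_assoc] using (sublist_append_right S B).append_left A
    · have := head?_append_cons_eq_clusterMap (t := t) (A := B.reverse) (S := S.reverse)
        (B := A.reverse) (by simpa using hB) (by rwa [head?_reverse]) hm₂T
        (by rw [← head?_reverse] at hpv; simpa using hpv)
      rwa [← head?_reverse, show (A ++ t :: B).reverse = B.reverse ++ t :: A.reverse by simp]

end Clustering

theorem dsep_of_cluster_dsep_general
    (V : Set α) (E : α → α → Prop) (T : Set α) (t : α)
    (V₁ V₂ V₃ V₁' V₂' V₃' : Set α)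
    (hdag : IsDAG V E)
    (ht : t ∉ V)
    (hT : IsTransitCluster V E T)
    (h1 : V₁ ⊆ V)
    (hT1 : T ⊆ V₁ ∨ T ∩ V₁ = ∅)
    (hT2 : T ⊆ V₂ ∨ T ∩ V₂ = ∅)
    (hT3 : T ⊆ V₃ ∨ T ∩ V₃ = ∅)
    (hc1 : V₁' \ {t} = V₁ \ T) (hc1t : T ⊆ V₁ ↔ t ∈ V₁')
    (hc2 : V₂' \ {t} = V₂ \ T) (hc2t : T ⊆ V₂ ↔ t ∈ V₂')
    (hc3 : V₃' \ {t} = V₃ \ T) (hc3t : T ⊆ V₃ ↔ t ∈ V₃')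
    (hsep : DSep (ClusterEdge E T t) V₁' V₂' V₃') :
    DSep E V₁ V₂ V₃ := by
  obtain ⟨-, hE, hacy⟩ := hdag
  have h₁ : IsClusterEquiv T t V₁ V₁' := ⟨hT1, hc1, hc1t⟩
  have h₂ : IsClusterEquiv T t V₂ V₂' := ⟨hT2, hc2, hc2t⟩
  have h₃ : IsClusterEquiv T t V₃ V₃' := ⟨hT3, hc3, hc3t⟩
  intro u hu v hv huv
  exact hsep _ (h₁.clusterMap_mem hu) _ (h₂.clusterMap_mem hv)
    (huv.clusterEdge hE ht hacy hT h₃ (h1 hu))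

/-- d-separation in the clustered graph implies d-separation of
the clustering-equivalent sets in the original graph. -/
theorem dsep_of_cluster_dsep
    (V : Set α) (E : α → α → Prop) (T : Set α) (t : α)
    (V₁ V₂ V₃ V₁' V₂' V₃' : Set α)
    (hdag : IsDAG V E)
    (ht : t ∉ V)
    (hT : IsTransitCluster V E T)
    (h1 : V₁ ⊆ V) (h2 : V₂ ⊆ V) (h3 : V₃ ⊆ V)
    (h12 : Disjoint V₁ V₂) (h13 : Disjoint V₁ V₃) (h23 : Disjoint V₂ V₃)
    (hT1 : T ⊆ V₁ ∨ T ∩ V₁ = ∅)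
    (hT2 : T ⊆ V₂ ∨ T ∩ V₂ = ∅)
    (hT3 : T ⊆ V₃ ∨ T ∩ V₃ = ∅)
    (hc1 : V₁' \ {t} = V₁ \ T) (hc1t : T ⊆ V₁ ↔ t ∈ V₁')
    (hc2 : V₂' \ {t} = V₂ \ T) (hc2t : T ⊆ V₂ ↔ t ∈ V₂')
    (hc3 : V₃' \ {t} = V₃ \ T) (hc3t : T ⊆ V₃ ↔ t ∈ V₃')
    (hsep : DSep (ClusterEdge E T t) V₁' V₂' V₃') :
    DSep E V₁ V₂ V₃ :=
  dsep_of_cluster_dsep_general V E T t V₁ V₂ V₃ V₁' V₂' V₃' hdag ht hT h1 hT1 hT2 hT3 hc1 hc1t hc2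
    hc2t hc3 hc3t hsep
end
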